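/- arXiv:2601.09196 — 4 statements merged into one kernel-verified Lean document; each statement's English description precedes it below -/
import Mathlib

section
/- For every n ∈ ℕ and every pair of sequences x^n, y^n ∈ 𝒵^n, the generalized likelihood ratio of the two-sample testing problem, Λ(x^n,y^n) = (sup_{P ∈ 𝒫̄(𝒵)} P^n(x^n)·P^n(y^n)) / (sup_{(P_1,P_2) ∈ 𝒫̄(𝒵)×𝒫̄(𝒵)} P_1^n(x^n)·P_2^n(y^n)), satisfies −2·ln Λ(x^n,y^n) = 4n·D_JS(T_{x^n}‖T_{y^n}). In particular, the generalized likelihood ratio test for the two-sample testing problem is the divergence test based on the Jensen–Shannon divergence. -/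
open scoped BigOperators
open Filter MeasureTheory Matrix

namespace TwoSampleTest

variable {m : ℕ}

/-- All probability distributions on the alphabet `Fin (m+1)` (the set `𝒫̄(𝒵)`). -/
def IsDist (P : Fin (m+1) → ℝ) : Prop :=
  (∀ i, 0 ≤ P i) ∧ ∑ i, P i = 1

/-- Strictly positive probability distributions on `Fin (m+1)` (the set `𝒫(𝒵)`). -/
def IsPosDist (P : Fin (m+1) → ℝ) : Prop :=
  (∀ i, 0 < P i) ∧ ∑ i, P i = 1

/-- The open coordinate domain `Ξ ⊆ ℝ^m`. -/
def Xi (m : ℕ) : Set (Fin m → ℝ) :=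
  {x | (∀ i, 0 < x i) ∧ ∑ i, x i < 1}

/-- Coordinate vector (first `m` components) of a distribution on `Fin (m+1)`. -/
def coordOf (P : Fin (m+1) → ℝ) : Fin m → ℝ := fun i => P i.castSucc

/-- Euclidean norm on `ℝ^m`. -/
noncomputable def l2norm (v : Fin m → ℝ) : ℝ := Real.sqrt (∑ i, (v i)^2)

/-- ℓ₁ distance between two distributions. -/
noncomputable def l1dist (P Q : Fin (m+1) → ℝ) : ℝ := ∑ i, |P i - Q i|

/-- A divergence on `𝒫(𝒵)`, viewed through coordinates in `Ξ`. -/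
structure Divergence (m : ℕ) where
  f : (Fin m → ℝ) → (Fin m → ℝ) → ℝ
  smooth : ContDiffOn ℝ (⊤ : ℕ∞)
    (fun p : (Fin m → ℝ) × (Fin m → ℝ) => f p.1 p.2) ((Xi m) ×ˢ (Xi m))
  nonneg : ∀ s ∈ Xi m, ∀ r ∈ Xi m, 0 ≤ f s r
  eq_zero_iff : ∀ s ∈ Xi m, ∀ r ∈ Xi m, (f s r = 0 ↔ s = r)
  taylor : ∀ r ∈ Xi m, ∃ G : Matrix (Fin m) (Fin m) ℝ, G.PosDef ∧
      ∃ C > (0:ℝ), ∃ δ > (0:ℝ), ∀ e : Fin m → ℝ, l2norm e < δ → r + e ∈ Xi m →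
        |f (r + e) r - (1/2) * ∑ i, ∑ j, G i j * e i * e j| ≤ C * (l2norm e)^3
  boundary : ∀ r ∈ Xi m, ∀ S : ℕ → (Fin m → ℝ), (∀ n, S n ∈ Xi m) →
      ∀ L ∈ frontier (Xi m), Filter.Tendsto S Filter.atTop (nhds L) →
        0 < Filter.liminf (fun n => f (S n) r) Filter.atTop

/-- The divergence evaluated at two distributions. -/
noncomputable def Dapp (D : Divergence m) (T R : Fin (m+1) → ℝ) : ℝ :=
  D.f (coordOf T) (coordOf R)

/-- The matrix `A_{D,P}` associated with a divergence `D` at coordinate point `p`: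
`a_{ij} = ½ ∂²D(S‖p)/∂S_i∂S_j` at `S = p`. -/
noncomputable def Amat (D : Divergence m) (p : Fin m → ℝ) : Matrix (Fin m) (Fin m) ℝ :=
  Matrix.of fun i j =>
    (1/2) * fderiv ℝ (fun s => fderiv ℝ (fun s' => D.f s' p) s (Pi.single j 1)) p (Pi.single i 1)

/-- The matrix `Σ_P`. -/
noncomputable def SigmaMat (P : Fin (m+1) → ℝ) : Matrix (Fin m) (Fin m) ℝ :=
  Matrix.of fun i j =>
    if i = j then 1 / P i.castSucc + 1 / P (Fin.last m) else 1 / P (Fin.last m)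

/-- `D` is an invariant divergence with constant `η`. -/
def IsInvariant (D : Divergence m) (η : ℝ) : Prop :=
  ∀ P : Fin (m+1) → ℝ, IsPosDist P → Amat D (coordOf P) = η • SigmaMat P

/-- Quadratic form `vᵀ M v`. -/
noncomputable def quadForm (M : Matrix (Fin m) (Fin m) ℝ) (v : Fin m → ℝ) : ℝ :=
  v ⬝ᵥ M.mulVec v

/-- Type (empirical distribution) of a sequence. -/
noncomputable def typeOf {n : ℕ} (x : Fin n → Fin (m+1)) : Fin (m+1) → ℝ :=
  fun i => ((Finset.univ.filter (fun t => x t = i)).card : ℝ) / n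

/-- Probability of a sequence under i.i.d. sampling from `P`. -/
def probSeq (P : Fin (m+1) → ℝ) {n : ℕ} (x : Fin n → Fin (m+1)) : ℝ := ∏ t, P (x t)

/-- Type-I error of the divergence test with test statistic `Dfun` and threshold `r`,
under common distribution `P`: the probability that `Dfun(T_{X^n}‖T_{Y^n}) ≥ r`. -/
noncomputable def alpha (Dfun : (Fin (m+1) → ℝ) → (Fin (m+1) → ℝ) → ℝ) (r : ℝ)
    (P : Fin (m+1) → ℝ) (n : ℕ) : ℝ :=
  ∑ x : Fin n → Fin (m+1), ∑ y : Fin n → Fin (m+1),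
    if r ≤ Dfun (typeOf x) (typeOf y) then probSeq P x * probSeq P y else 0

/-- Type-II error: the probability under `P₁ × P₂` that `Dfun(T_{X^n}‖T_{Y^n}) < r`. -/
noncomputable def beta (Dfun : (Fin (m+1) → ℝ) → (Fin (m+1) → ℝ) → ℝ) (r : ℝ)
    (P₁ P₂ : Fin (m+1) → ℝ) (n : ℕ) : ℝ :=
  ∑ x : Fin n → Fin (m+1), ∑ y : Fin n → Fin (m+1),
    if Dfun (typeOf x) (typeOf y) < r then probSeq P₁ x * probSeq P₂ y else 0

/-- Kullback-Leibler divergence (with the convention `0 · ln 0 = 0`). -/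
noncomputable def KL (P Q : Fin (m+1) → ℝ) : ℝ := ∑ i, P i * Real.log (P i / Q i)

/-- KL divergence variance. -/
noncomputable def VKL (P Q : Fin (m+1) → ℝ) : ℝ :=
  ∑ i, P i * (Real.log (P i / Q i) - KL P Q)^2

/-- Bhattacharyya distance. -/
noncomputable def DB (P Q : Fin (m+1) → ℝ) : ℝ :=
  - Real.log (∑ i, Real.sqrt (P i * Q i))

/-- The normalized geometric mean `P*` of two distributions. -/
noncomputable def Pstar (P₁ P₂ : Fin (m+1) → ℝ) : Fin (m+1) → ℝ :=
  fun i => Real.sqrt (P₁ i * P₂ i) / ∑ j, Real.sqrt (P₁ j * P₂ j)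

/-- Jensen–Shannon divergence. -/
noncomputable def DJS (T R : Fin (m+1) → ℝ) : ℝ :=
  (1/2) * KL T (fun i => (T i + R i)/2) + (1/2) * KL R (fun i => (T i + R i)/2)

/-- Law of `m` i.i.d. standard Gaussians. -/
noncomputable def stdGaussianPi (m : ℕ) : Measure (Fin m → ℝ) :=
  Measure.pi (fun _ => ProbabilityTheory.gaussianReal 0 1)

/-- Tail probability of the generalized chi-square distribution with weights `lam`:
`P(∑ lam i * U i ^ 2 ≥ c)` for i.i.d. standard normal `U`. -/
noncomputable def genChiSqTail (m : ℕ) (lam : Fin m → ℝ) (c : ℝ) : ℝ :=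
  (stdGaussianPi m {u | c ≤ ∑ i, lam i * (u i)^2}).toReal

/-- Tail probability of the chi-square distribution with `m` degrees of freedom. -/
noncomputable def chiSqTail (m : ℕ) (c : ℝ) : ℝ := genChiSqTail m (fun _ => 1) c

/-- Inverse of the chi-square tail probability. -/
noncomputable def chiSqTailInv (m : ℕ) (ε : ℝ) : ℝ :=
  sInf {c : ℝ | 0 < c ∧ chiSqTail m c ≤ ε}

/-- The linear functional `ℓ_P(T,R)`. -/
noncomputable def ellP (P P₁ P₂ T R : Fin (m+1) → ℝ) : ℝ :=
  ∑ i, (T i - P i) * Real.log (P i / P₁ i) + ∑ i, (R i - P i) * Real.log (P i / P₂ i)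

/-- Membership of `(T,R)` in the set `A_{Σ_P}(r)`. -/
noncomputable def memASigma (P T R : Fin (m+1) → ℝ) (r : ℝ) : Prop :=
  IsPosDist T ∧ IsPosDist R ∧
    quadForm (SigmaMat P) (fun i => coordOf T i - coordOf P i)
      + quadForm (SigmaMat P) (fun i => coordOf R i - coordOf P i) ≤ r

/-- The vector with components `ln(P_i/Q_i) − ln(P_k/Q_k)`, `i = 1,…,k−1`. -/
noncomputable def cvec (P Q : Fin (m+1) → ℝ) : Fin m → ℝ :=
  fun i => Real.log (P i.castSucc / Q i.castSucc) - Real.log (P (Fin.last m) / Q (Fin.last m))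

/-- A type distribution with denominator `n`. -/
def IsTypeDist (n : ℕ) (P : Fin (m+1) → ℝ) : Prop :=
  IsDist P ∧ ∀ i, ∃ a : ℕ, P i = (a : ℝ) / n

/-- The best (largest) type-II error exponent `−(1/n) ln β_n` over all thresholds `r > 0`
whose type-I error is at most `ε` for every common distribution `P ∈ 𝒫(𝒵)`. -/
noncomputable def supExp (Dfun : (Fin (m+1) → ℝ) → (Fin (m+1) → ℝ) → ℝ)
    (P₁ P₂ : Fin (m+1) → ℝ) (ε : ℝ) (n : ℕ) : ℝ :=
  sSup { v : ℝ | ∃ r : ℝ, 0 < r ∧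
    (∀ P : Fin (m+1) → ℝ, IsPosDist P → alpha Dfun r P n ≤ ε) ∧
    v = -(Real.log (beta Dfun r P₁ P₂ n)) / n }

/-- The generalized likelihood ratio of the two-sample testing problem:
numerator is the likelihood maximized over the null `P₁ = P₂ = P ∈ 𝒫̄(𝒵)`,
denominator is the likelihood maximized over all pairs `(P₁,P₂) ∈ 𝒫̄²(𝒵)`. -/
noncomputable def GLR {m n : ℕ} (x y : Fin n → Fin (m+1)) : ℝ :=
  sSup {v : ℝ | ∃ P : Fin (m+1) → ℝ, IsDist P ∧ v = probSeq P x * probSeq P y} /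
  sSup {v : ℝ | ∃ P₁ P₂ : Fin (m+1) → ℝ, IsDist P₁ ∧ IsDist P₂ ∧
    v = probSeq P₁ x * probSeq P₂ y}

/-!
The likelihood `∏ P_i ^ c_i` of a sample with letter counts `c` is maximised over distributions
by the type `c / N` (Gibbs' inequality), and the logarithm of that maximum is `N ∑ T_i ln T_i`.
Under the null, `P^n(x^n) P^n(y^n)` is the likelihood of the pooled sample of length `2n`, whose
type is the mixture `M = (T_x + T_y) / 2`. Hence
`−2 ln Λ = 2n (∑ T_x ln T_x + ∑ T_y ln T_y − 2 ∑ M ln M) = 4n D_JS(T_x ‖ T_y)`.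
-/

open Finset Real

lemma pow_le_div_pow_mul_exp {p N : ℝ} (hp : 0 ≤ p) (hN : 0 < N) (c : ℕ) :
    p ^ c ≤ (c / N) ^ c * exp (N * p - c) := by
  rcases Nat.eq_zero_or_pos c with rfl | hc
  · simpa using one_le_exp (by positivity)
  have hq : 0 < (c : ℝ) / N := by positivity
  have hexp : exp (N * p - c) = exp (p / (c / N) - 1) ^ c := by
    rw [← exp_nat_mul]
    field_simp
  calc p ^ c = ((c / N) * (p / (c / N))) ^ c := by rw [mul_div_cancel₀ _ hq.ne']
    _ ≤ ((c / N) * exp (p / (c / N) - 1)) ^ c := by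
      gcongr
      linarith [add_one_le_exp (p / (c / N) - 1)]
    _ = (c / N) ^ c * exp (N * p - c) := by rw [mul_pow, hexp]

lemma prod_pow_le_prod_div_pow {ι : Type*} [Fintype ι] {c : ι → ℕ} {N : ℕ}
    (hN : ∑ i, c i = N) {P : ι → ℝ} (hP : ∀ i, 0 ≤ P i) (hP1 : ∑ i, P i ≤ 1) :
    ∏ i, P i ^ c i ≤ ∏ i, ((c i : ℝ) / N) ^ c i := by
  rcases Nat.eq_zero_or_pos N with rfl | hNpos
  · have hc : ∀ i, c i = 0 := fun i => sum_eq_zero_iff.mp hN i (mem_univ i)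
    simp [hc]
  have hNR : (0 : ℝ) < N := by exact_mod_cast hNpos
  have hexp : ∑ i, ((N : ℝ) * P i - c i) ≤ 0 := by
    rw [sum_sub_distrib, ← mul_sum, ← Nat.cast_sum, hN]
    nlinarith
  calc ∏ i, P i ^ c i ≤ ∏ i, (((c i : ℝ) / N) ^ c i * exp (N * P i - c i)) :=
        prod_le_prod (fun i _ => pow_nonneg (hP i) _)
          (fun i _ => pow_le_div_pow_mul_exp (hP i) hNR (c i))
    _ = (∏ i, ((c i : ℝ) / N) ^ c i) * exp (∑ i, ((N : ℝ) * P i - c i)) := by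
      rw [prod_mul_distrib, exp_sum]
    _ ≤ ∏ i, ((c i : ℝ) / N) ^ c i :=
      mul_le_of_le_one_right (prod_nonneg fun i _ => by positivity) (exp_le_one_iff.mpr hexp)

variable {n : ℕ}

lemma probSeq_eq_prod_pow (P : Fin (m+1) → ℝ) (x : Fin n → Fin (m+1)) :
    probSeq P x = ∏ i, P i ^ #{t | x t = i} := by
  rw [probSeq, ← prod_fiberwise' univ x P]
  simp only [prod_const]

lemma sum_card_filter_eq (x : Fin n → Fin (m+1)) : ∑ i, #{t | x t = i} = n := by
  simpa using (card_eq_sum_card_fiberwise (s := univ) (t := univ) fun t _ => mem_univ (x t)).symm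

lemma typeOf_nonneg (x : Fin n → Fin (m+1)) (i : Fin (m+1)) : 0 ≤ typeOf x i := by
  unfold typeOf
  positivity

lemma typeOf_isDist (hn : 0 < n) (x : Fin n → Fin (m+1)) : IsDist (typeOf x) := by
  refine ⟨typeOf_nonneg x, ?_⟩
  simp only [typeOf]
  rw [← sum_div, ← Nat.cast_sum, sum_card_filter_eq, div_self (by positivity)]

lemma typeOf_apply_pos (x : Fin n → Fin (m+1)) (t : Fin n) : 0 < typeOf x (x t) := by
  have hcard : 0 < #{s | x s = x t} := card_pos.mpr ⟨t, mem_filter.mpr ⟨mem_univ t, rfl⟩⟩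
  have hn : 0 < n := t.pos
  unfold typeOf
  positivity

lemma probSeq_typeOf_pos (x : Fin n → Fin (m+1)) : 0 < probSeq (typeOf x) x :=
  prod_pos fun t _ => typeOf_apply_pos x t

lemma isGreatest_probSeq (x : Fin n → Fin (m+1)) :
    IsGreatest {v | ∃ P, IsDist P ∧ v = probSeq P x} (probSeq (typeOf x) x) := by
  refine ⟨?_, ?_⟩
  · rcases Nat.eq_zero_or_pos n with rfl | hn
    · refine ⟨Pi.single 0 1, ⟨fun i => ?_, by simp⟩, by simp [probSeq]⟩
      by_cases h : i = 0 <;> simp [h]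
    · exact ⟨typeOf x, typeOf_isDist hn x, rfl⟩
  · rintro v ⟨P, hP, rfl⟩
    rw [probSeq_eq_prod_pow, probSeq_eq_prod_pow]
    exact prod_pow_le_prod_div_pow (sum_card_filter_eq x) hP.1 hP.2.le

lemma log_probSeq_typeOf (x : Fin n → Fin (m+1)) :
    log (probSeq (typeOf x) x) = n * ∑ i, typeOf x i * log (typeOf x i) := by
  have hcard : ∀ i, (#{t | x t = i} : ℝ) = n * typeOf x i := by
    intro i
    rcases Nat.eq_zero_or_pos n with rfl | hn
    · simp
    · simp only [typeOf]
      field_simp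
  rw [probSeq, log_prod fun t _ => (typeOf_apply_pos x t).ne',
    ← sum_fiberwise' univ x fun i => log (typeOf x i)]
  simp only [sum_const, nsmul_eq_mul, hcard, mul_sum, mul_assoc]

lemma probSeq_append (P : Fin (m+1) → ℝ) (x y : Fin n → Fin (m+1)) :
    probSeq P (Fin.append x y) = probSeq P x * probSeq P y := by
  rw [probSeq, Fin.prod_univ_add]
  simp only [Fin.append_left, Fin.append_right]
  rfl

lemma typeOf_append (x y : Fin n → Fin (m+1)) :
    typeOf (Fin.append x y) = fun i => (typeOf x i + typeOf y i) / 2 := by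
  ext i
  have hcard : #{t | Fin.append x y t = i} = #{t | x t = i} + #{t | y t = i} := by
    simp only [card_filter, Fin.sum_univ_add, Fin.append_left, Fin.append_right]
  simp only [typeOf, hcard]
  push_cast
  ring

lemma DJS_eq_sum_mul_log {T R : Fin (m+1) → ℝ} (hT : ∀ i, 0 ≤ T i) (hR : ∀ i, 0 ≤ R i) :
    DJS T R = (∑ i, T i * log (T i) + ∑ i, R i * log (R i)) / 2
      - ∑ i, (T i + R i) / 2 * log ((T i + R i) / 2) := by
  have key : ∀ {t r : ℝ}, 0 ≤ t → 0 ≤ r →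
      t * log (t / ((t + r) / 2)) = t * log t - t * log ((t + r) / 2) := by
    intro t r ht hr
    rcases ht.eq_or_lt with rfl | ht
    · simp
    · rw [log_div ht.ne' (by positivity), mul_sub]
  have keyR : ∀ i, R i * log (R i / ((T i + R i) / 2)) =
      R i * log (R i) - R i * log ((T i + R i) / 2) := fun i => by
    rw [add_comm (T i), key (hR i) (hT i)]
  simp only [DJS, KL, key (hT _) (hR _), keyR, sum_sub_distrib, add_mul, sum_add_distrib,
    div_mul_eq_mul_div, ← sum_div]
  ring

lemma GLR_eq (x y : Fin n → Fin (m+1)) :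
    GLR x y = probSeq (typeOf (Fin.append x y)) (Fin.append x y)
      / (probSeq (typeOf x) x * probSeq (typeOf y) y) := by
  have hx := isGreatest_probSeq x
  have hy := isGreatest_probSeq y
  have hpair : IsGreatest {v | ∃ P₁ P₂ : Fin (m+1) → ℝ, IsDist P₁ ∧ IsDist P₂ ∧
      v = probSeq P₁ x * probSeq P₂ y} (probSeq (typeOf x) x * probSeq (typeOf y) y) := by
    refine ⟨?_, ?_⟩
    · obtain ⟨P₁, hP₁, h₁⟩ := hx.1
      obtain ⟨P₂, hP₂, h₂⟩ := hy.1
      exact ⟨P₁, P₂, hP₁, hP₂, by rw [h₁, h₂]⟩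
    · rintro v ⟨P₁, P₂, hP₁, hP₂, rfl⟩
      exact mul_le_mul (hx.2 ⟨P₁, hP₁, rfl⟩) (hy.2 ⟨P₂, hP₂, rfl⟩)
        (prod_nonneg fun t _ => hP₂.1 _) (probSeq_typeOf_pos x).le
  simp only [GLR, ← probSeq_append, (isGreatest_probSeq _).csSup_eq, hpair.csSup_eq]

theorem glrt_eq_js_test_general {m : ℕ} (n : ℕ) (x y : Fin n → Fin (m+1)) :
    -2 * Real.log (GLR x y) = 4 * n * DJS (typeOf x) (typeOf y) := by
  rw [GLR_eq, log_div (probSeq_typeOf_pos _).ne'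
      (mul_pos (probSeq_typeOf_pos x) (probSeq_typeOf_pos y)).ne',
    log_mul (probSeq_typeOf_pos x).ne' (probSeq_typeOf_pos y).ne',
    DJS_eq_sum_mul_log (typeOf_nonneg x) (typeOf_nonneg y),
    log_probSeq_typeOf, log_probSeq_typeOf, log_probSeq_typeOf, typeOf_append]
  push_cast
  ring

/-- The GLRT statistic of the two-sample testing problem equals
`4n` times the Jensen–Shannon divergence between the types of the two sequences;
in particular, the GLRT is the divergence test based on `D_JS`. -/
theorem glrt_eq_js_test {m : ℕ} (hm : 1 ≤ m) (n : ℕ) (x y : Fin n → Fin (m+1)) :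
    -2 * Real.log (GLR x y) = 4 * n * DJS (typeOf x) (typeOf y) :=
  glrt_eq_js_test_general n x y

end TwoSampleTest
end

section
/- Let P, P_1, P_2 ∈ 𝒫(𝒵) with P_1 ≠ P_2, and let c and d be the vectors in ℝ^{k−1} with c_i = ln(P_i/P_{1,i}) − ln(P_k/P_{1,k}) and d_i = ln(P_i/P_{2,i}) − ln(P_k/P_{2,k}). Then for all sufficiently small r > 0, the minimum of ℓ_P(T,R) over all (T,R) ∈ A_{Σ_𝐏}(r) equals −√r·√(V_KL(P‖P_1) + V_KL(P‖P_2)), and it is attained at 𝐓 = 𝐏 − √r·Σ_𝐏^{−1}c / √(cᵀΣ_𝐏^{−1}c + dᵀΣ_𝐏^{−1}d) and 𝐑 = 𝐏 − √r·Σ_𝐏^{−1}d / √(cᵀΣ_𝐏^{−1}c + dᵀΣ_𝐏^{−1}d). -/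
open scoped BigOperators
open Filter MeasureTheory Matrix

namespace TwoSampleTest

variable {m : ℕ}

/-! ### Auxiliary lemmas for Statement 7 -/

/-- Explicit inverse of `SigmaMat P`: `(Σ_P⁻¹)_{ij} = P_i δ_{ij} − P_i P_j`. -/
noncomputable def Minv (P : Fin (m+1) → ℝ) : Matrix (Fin m) (Fin m) ℝ :=
  Matrix.of fun i j => (if i = j then P i.castSucc else 0) - P i.castSucc * P j.castSucc

lemma sum_coord (P : Fin (m+1) → ℝ) (h : ∑ i, P i = 1) :
    ∑ i : Fin m, P i.castSucc = 1 - P (Fin.last m) := by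
  rw [Fin.sum_univ_castSucc] at h; linarith

lemma sigma_mul_Minv (P : Fin (m+1) → ℝ) (hP : IsPosDist P) :
    SigmaMat P * Minv P = 1 := by
  ext i j
  rw [Matrix.mul_apply]
  simp only [SigmaMat, Minv, Matrix.of_apply]
  have hp : ∀ i : Fin (m+1), P i ≠ 0 := fun i => (hP.1 i).ne'
  have hsum := sum_coord P hP.2
  have key : ∀ l : Fin m,
      (if i = l then 1 / P i.castSucc + 1 / P (Fin.last m) else 1 / P (Fin.last m)) *
        ((if l = j then P l.castSucc else 0) - P l.castSucc * P j.castSucc)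
      = (if i = l then (1 / P i.castSucc) *
            ((if l = j then P l.castSucc else 0) - P l.castSucc * P j.castSucc) else 0)
        + (1 / P (Fin.last m)) *
            ((if l = j then P l.castSucc else 0) - P l.castSucc * P j.castSucc) := by
    intro l; split <;> ring
  rw [Finset.sum_congr rfl fun l _ => key l, Finset.sum_add_distrib]
  rw [Finset.sum_ite_eq Finset.univ i
    (fun l => (1 / P i.castSucc) *
      ((if l = j then P l.castSucc else 0) - P l.castSucc * P j.castSucc))]
  have h2 : ∑ l : Fin m, (1 / P (Fin.last m)) *
      ((if l = j then P l.castSucc else 0) - P l.castSucc * P j.castSucc)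
      = (1 / P (Fin.last m)) * (P j.castSucc - (1 - P (Fin.last m)) * P j.castSucc) := by
    rw [← Finset.mul_sum, Finset.sum_sub_distrib,
      Finset.sum_ite_eq' Finset.univ j (fun l => P l.castSucc), ← Finset.sum_mul, hsum]
    simp
  rw [h2]
  simp only [Finset.mem_univ, if_true, Matrix.one_apply]
  by_cases hij : i = j
  · subst hij; rw [if_pos rfl, if_pos rfl]
    field_simp [hp i.castSucc, hp (Fin.last m)]
    ring
  · rw [if_neg hij, if_neg hij]
    field_simp [hp i.castSucc, hp (Fin.last m)]
    ring

lemma sigma_inv (P : Fin (m+1) → ℝ) (hP : IsPosDist P) :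
    (SigmaMat P)⁻¹ = Minv P :=
  Matrix.inv_eq_right_inv (sigma_mul_Minv P hP)

lemma quadForm_sigma (P : Fin (m+1) → ℝ) (w : Fin m → ℝ) :
    quadForm (SigmaMat P) w
      = ∑ i, (w i)^2 / P i.castSucc + (∑ i, w i)^2 / P (Fin.last m) := by
  unfold quadForm
  simp only [dotProduct, Matrix.mulVec, SigmaMat, Matrix.of_apply]
  have key : ∀ i : Fin m,
      w i * (Finset.univ.sum fun j => (if i = j then 1 / P i.castSucc + 1 / P (Fin.last m)
          else 1 / P (Fin.last m)) * w j)
      = (w i)^2 / P i.castSucc + (w i * ∑ j, w j) / P (Fin.last m) := by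
    intro i
    have h1 : ∀ j : Fin m, (if i = j then 1 / P i.castSucc + 1 / P (Fin.last m)
          else 1 / P (Fin.last m)) * w j
        = (if i = j then (1 / P i.castSucc) * w j else 0) + (1 / P (Fin.last m)) * w j := by
      intro j; split <;> ring
    rw [Finset.sum_congr rfl fun j _ => h1 j, Finset.sum_add_distrib,
      Finset.sum_ite_eq Finset.univ i (fun j => (1 / P i.castSucc) * w j), ← Finset.mul_sum]
    simp only [Finset.mem_univ, if_true]
    ring
  rw [Finset.sum_congr rfl fun i _ => key i, Finset.sum_add_distrib]
  congr 1
  rw [← Finset.sum_div, ← Finset.sum_mul]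
  ring

lemma quadForm_sigma_nonneg (P : Fin (m+1) → ℝ) (hP : IsPosDist P) (w : Fin m → ℝ) :
    0 ≤ quadForm (SigmaMat P) w := by
  rw [quadForm_sigma]
  have h1 : 0 ≤ ∑ i, (w i)^2 / P i.castSucc :=
    Finset.sum_nonneg fun i _ => div_nonneg (sq_nonneg _) (hP.1 _).le
  have h2 : 0 ≤ (∑ i, w i)^2 / P (Fin.last m) :=
    div_nonneg (sq_nonneg _) (hP.1 _).le
  linarith

lemma sigma_entry_symm (P : Fin (m+1) → ℝ) (i j : Fin m) :
    SigmaMat P i j = SigmaMat P j i := by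
  simp only [SigmaMat, Matrix.of_apply]
  by_cases h : i = j
  · subst h; rfl
  · rw [if_neg h, if_neg (Ne.symm h)]

lemma dot_sigma_comm (P : Fin (m+1) → ℝ) (x y : Fin m → ℝ) :
    x ⬝ᵥ (SigmaMat P).mulVec y = y ⬝ᵥ (SigmaMat P).mulVec x := by
  simp only [dotProduct, Matrix.mulVec, Finset.mul_sum]
  rw [Finset.sum_comm]
  refine Finset.sum_congr rfl fun i _ => Finset.sum_congr rfl fun j _ => ?_
  rw [sigma_entry_symm P j i]
  ring

lemma quadForm_combo (P : Fin (m+1) → ℝ) (t : ℝ) (x u : Fin m → ℝ) :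
    quadForm (SigmaMat P) (t • u + x)
      = quadForm (SigmaMat P) u * (t * t) + 2 * (x ⬝ᵥ (SigmaMat P).mulVec u) * t
        + quadForm (SigmaMat P) x := by
  unfold quadForm
  rw [Matrix.mulVec_add, Matrix.mulVec_smul, add_dotProduct,
    smul_dotProduct, dotProduct_add, dotProduct_add,
    dotProduct_smul, dotProduct_smul]
  have := dot_sigma_comm P x u
  simp only [smul_eq_mul]
  rw [← this]
  ring

lemma cs_sigma (P : Fin (m+1) → ℝ) (hP : IsPosDist P) (x u : Fin m → ℝ) :
    (x ⬝ᵥ (SigmaMat P).mulVec u)^2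
      ≤ quadForm (SigmaMat P) x * quadForm (SigmaMat P) u := by
  have h := discrim_le_zero (a := quadForm (SigmaMat P) u)
    (b := 2 * (x ⬝ᵥ (SigmaMat P).mulVec u)) (c := quadForm (SigmaMat P) x) ?_
  · rw [discrim] at h; nlinarith
  · intro t
    rw [← quadForm_combo P t x u]
    exact quadForm_sigma_nonneg P hP _

lemma neg_sqrt_le_dot (P : Fin (m+1) → ℝ) (hP : IsPosDist P) (x u : Fin m → ℝ) :
    -(Real.sqrt (quadForm (SigmaMat P) x) * Real.sqrt (quadForm (SigmaMat P) u))
      ≤ x ⬝ᵥ (SigmaMat P).mulVec u := by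
  have h := cs_sigma P hP x u
  have h1 : |x ⬝ᵥ (SigmaMat P).mulVec u|
      ≤ Real.sqrt (quadForm (SigmaMat P) x * quadForm (SigmaMat P) u) := by
    rw [← Real.sqrt_sq_eq_abs]
    exact Real.sqrt_le_sqrt h
  rw [Real.sqrt_mul (quadForm_sigma_nonneg P hP x)] at h1
  have := neg_abs_le (x ⬝ᵥ (SigmaMat P).mulVec u)
  linarith

lemma sqrt_cs (a₁ a₂ b₁ b₂ : ℝ) (ha₁ : 0 ≤ a₁) (ha₂ : 0 ≤ a₂) (hb₁ : 0 ≤ b₁) (hb₂ : 0 ≤ b₂) :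
    Real.sqrt a₁ * Real.sqrt b₁ + Real.sqrt a₂ * Real.sqrt b₂
      ≤ Real.sqrt (a₁ + a₂) * Real.sqrt (b₁ + b₂) := by
  rw [← Real.sqrt_mul ha₁, ← Real.sqrt_mul ha₂, ← Real.sqrt_mul (by linarith : (0:ℝ) ≤ a₁ + a₂)]
  have h2 : 2 * Real.sqrt (a₁ * b₁) * Real.sqrt (a₂ * b₂) ≤ a₁ * b₂ + a₂ * b₁ := by
    have e : Real.sqrt (a₁ * b₁) * Real.sqrt (a₂ * b₂)
        = Real.sqrt (a₁ * b₂) * Real.sqrt (a₂ * b₁) := by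
      rw [← Real.sqrt_mul (mul_nonneg ha₁ hb₁), ← Real.sqrt_mul (mul_nonneg ha₁ hb₂)]
      ring_nf
    have h3 := two_mul_le_add_sq (Real.sqrt (a₁ * b₂)) (Real.sqrt (a₂ * b₁))
    rw [Real.sq_sqrt (mul_nonneg ha₁ hb₂), Real.sq_sqrt (mul_nonneg ha₂ hb₁)] at h3
    rw [mul_assoc, e]
    linarith [h3]
  have key : (Real.sqrt (a₁ * b₁) + Real.sqrt (a₂ * b₂))^2 ≤ (a₁ + a₂) * (b₁ + b₂) := by
    have e1 := Real.sq_sqrt (mul_nonneg ha₁ hb₁)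
    have e2 := Real.sq_sqrt (mul_nonneg ha₂ hb₂)
    nlinarith [Real.sqrt_nonneg (a₁*b₁), Real.sqrt_nonneg (a₂*b₂)]
  have hnn : 0 ≤ Real.sqrt (a₁ * b₁) + Real.sqrt (a₂ * b₂) :=
    add_nonneg (Real.sqrt_nonneg _) (Real.sqrt_nonneg _)
  exact (Real.le_sqrt hnn (by nlinarith)).mpr key

lemma VKL_eq_dot (P Q : Fin (m+1) → ℝ) (hP : IsPosDist P) :
    cvec P Q ⬝ᵥ (Minv P).mulVec (cvec P Q) = VKL P Q := by
  set g : Fin (m+1) → ℝ :=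
    fun i => Real.log (P i / Q i) - Real.log (P (Fin.last m) / Q (Fin.last m)) with hg
  set ν : ℝ := ∑ i, P i * g i with hν
  have hglast : g (Fin.last m) = 0 := by simp [hg]
  have hgc : ∀ i : Fin m, cvec P Q i = g i.castSucc := fun i => rfl
  -- KL = ν + log (P last / Q last)
  have hKL : KL P Q = ν + Real.log (P (Fin.last m) / Q (Fin.last m)) := by
    rw [KL, hν]
    have : ∀ i : Fin (m+1), P i * Real.log (P i / Q i)
        = P i * g i + P i * Real.log (P (Fin.last m) / Q (Fin.last m)) := by
      intro i; simp only [hg]; ring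
    rw [Finset.sum_congr rfl fun i _ => this i, Finset.sum_add_distrib, ← Finset.sum_mul, hP.2]
    ring
  -- VKL = ∑ P g² − ν²
  have hVKL : VKL P Q = ∑ i, P i * (g i)^2 - ν^2 := by
    rw [VKL]
    have e : ∀ i : Fin (m+1), P i * (Real.log (P i / Q i) - KL P Q)^2
        = P i * (g i)^2 - 2 * ν * (P i * g i) + ν^2 * P i := by
      intro i
      have : Real.log (P i / Q i) - KL P Q = g i - ν := by
        rw [hKL]; simp only [hg]; ring
      rw [this]; ring
    rw [Finset.sum_congr rfl fun i _ => e i]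
    rw [Finset.sum_add_distrib, Finset.sum_sub_distrib, ← Finset.mul_sum, ← Finset.mul_sum,
      hP.2, ← hν]
    ring
  -- coordinate sums
  have hsum1 : ∑ i, P i * g i = ∑ i : Fin m, P i.castSucc * cvec P Q i := by
    rw [Fin.sum_univ_castSucc, hglast, mul_zero, add_zero]
    simp only [hgc]
  have hsum2 : ∑ i, P i * (g i)^2 = ∑ i : Fin m, P i.castSucc * (cvec P Q i)^2 := by
    rw [Fin.sum_univ_castSucc, hglast]
    simp only [hgc]
    norm_num
  -- LHS computation
  set c : Fin m → ℝ := cvec P Q with hc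
  set μ : ℝ := ∑ j : Fin m, P j.castSucc * c j with hμ
  have hLHS : c ⬝ᵥ (Minv P).mulVec c = ∑ i : Fin m, P i.castSucc * (c i)^2 - μ^2 := by
    simp only [dotProduct, Matrix.mulVec, Minv, Matrix.of_apply]
    have hin : ∀ i : Fin m,
        (Finset.univ.sum fun j => ((if i = j then P i.castSucc else 0)
            - P i.castSucc * P j.castSucc) * c j)
        = P i.castSucc * c i - P i.castSucc * μ := by
      intro i
      have e : ∀ j : Fin m, ((if i = j then P i.castSucc else 0)
            - P i.castSucc * P j.castSucc) * c j
          = (if i = j then P i.castSucc * c j else 0) - P i.castSucc * (P j.castSucc * c j) := by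
        intro j; split <;> ring
      rw [Finset.sum_congr rfl fun j _ => e j, Finset.sum_sub_distrib,
        Finset.sum_ite_eq Finset.univ i (fun j => P i.castSucc * c j), ← Finset.mul_sum, ← hμ]
      simp
    have e2 : ∀ i : Fin m, c i * (∑ j : Fin m, ((if i = j then P i.castSucc else 0)
          - P i.castSucc * P j.castSucc) * c j)
        = P i.castSucc * (c i)^2 - μ * (P i.castSucc * c i) := by
      intro i; rw [hin i]; ring
    rw [Finset.sum_congr rfl fun i _ => e2 i, Finset.sum_sub_distrib, ← Finset.mul_sum, ← hμ]
    ring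
  rw [hLHS, hVKL, hsum2, hν, hsum1]

lemma VKL_nonneg (P Q : Fin (m+1) → ℝ) (hP : IsPosDist P) : 0 ≤ VKL P Q :=
  Finset.sum_nonneg fun i _ => mul_nonneg (hP.1 i).le (sq_nonneg _)

lemma VKL_eq_zero (P Q : Fin (m+1) → ℝ) (hP : IsPosDist P) (hQ : IsPosDist Q)
    (h : VKL P Q = 0) : P = Q := by
  have hterm : ∀ i ∈ Finset.univ, P i * (Real.log (P i / Q i) - KL P Q)^2 = 0 := by
    rw [VKL] at h
    exact (Finset.sum_eq_zero_iff_of_nonneg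
      (fun i _ => mul_nonneg (hP.1 i).le (sq_nonneg _))).mp h
  have hlog : ∀ i, Real.log (P i / Q i) = KL P Q := by
    intro i
    have := hterm i (Finset.mem_univ i)
    have h2 : (Real.log (P i / Q i) - KL P Q)^2 = 0 := by
      rcases mul_eq_zero.mp this with h' | h'
      · exact absurd h' (hP.1 i).ne'
      · exact h'
    have := pow_eq_zero_iff (n := 2) (by norm_num) |>.mp h2
    linarith
  have hPi : ∀ i, P i = Real.exp (KL P Q) * Q i := by
    intro i
    have hpos : 0 < P i / Q i := div_pos (hP.1 i) (hQ.1 i)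
    have h' := Real.exp_log hpos
    rw [hlog i] at h'
    exact (div_eq_iff (hQ.1 i).ne').mp h'.symm
  have hsum : (1:ℝ) = Real.exp (KL P Q) * 1 := by
    calc (1:ℝ) = ∑ i, P i := hP.2.symm
    _ = ∑ i, Real.exp (KL P Q) * Q i := Finset.sum_congr rfl fun i _ => hPi i
    _ = Real.exp (KL P Q) * ∑ i, Q i := by rw [Finset.mul_sum]
    _ = Real.exp (KL P Q) * 1 := by rw [hQ.2]
  funext i
  rw [hPi i]
  have : Real.exp (KL P Q) = 1 := by linarith [hsum]
  rw [this, one_mul]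

lemma lin_eq (T P f' : Fin (m+1) → ℝ) (hT : ∑ i, T i = 1) (hP : ∑ i, P i = 1) :
    ∑ i, (T i - P i) * f' i
      = ∑ i : Fin m, (T i.castSucc - P i.castSucc) * (f' i.castSucc - f' (Fin.last m)) := by
  have hzero : ∑ i, (T i - P i) = 0 := by
    rw [Finset.sum_sub_distrib, hT, hP, sub_self]
  have e : ∀ i : Fin (m+1), (T i - P i) * f' i
      = (T i - P i) * (f' i - f' (Fin.last m)) + (T i - P i) * f' (Fin.last m) := by
    intro i; ring
  rw [Finset.sum_congr rfl fun i _ => e i, Finset.sum_add_distrib, ← Finset.sum_mul, hzero,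
    zero_mul, add_zero, Fin.sum_univ_castSucc]
  simp

lemma ellP_eq (P P₁ P₂ T R : Fin (m+1) → ℝ) (hT : ∑ i, T i = 1) (hR : ∑ i, R i = 1)
    (hP : ∑ i, P i = 1) :
    ellP P P₁ P₂ T R
      = cvec P P₁ ⬝ᵥ (fun i => coordOf T i - coordOf P i)
        + cvec P P₂ ⬝ᵥ (fun i => coordOf R i - coordOf P i) := by
  rw [ellP, lin_eq T P (fun i => Real.log (P i / P₁ i)) hT hP,
    lin_eq R P (fun i => Real.log (P i / P₂ i)) hR hP]
  simp only [dotProduct, cvec, coordOf]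
  congr 1 <;> exact Finset.sum_congr rfl fun i _ => by ring

lemma quadForm_smul (M : Matrix (Fin m) (Fin m) ℝ) (a : ℝ) (v : Fin m → ℝ) :
    quadForm M (a • v) = a^2 * quadForm M v := by
  unfold quadForm
  rw [Matrix.mulVec_smul, smul_dotProduct, dotProduct_smul]
  simp only [smul_eq_mul]
  ring

lemma construct_pos (P : Fin (m+1) → ℝ) (hP : IsPosDist P) (v : Fin m → ℝ)
    (h1 : ∀ i : Fin m, |v i| < P i.castSucc) (h2 : |∑ i, v i| < P (Fin.last m)) :
    IsPosDist (fun i => P i - (Fin.snoc v (- ∑ j, v j) : Fin (m+1) → ℝ) i) ∧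
    coordOf (fun i => P i - (Fin.snoc v (- ∑ j, v j) : Fin (m+1) → ℝ) i)
      = fun i => coordOf P i - v i := by
  constructor
  · constructor
    · intro i
      have hlt : |(Fin.snoc v (- ∑ j, v j) : Fin (m+1) → ℝ) i| < P i := by
        refine Fin.lastCases
          (motive := fun i => |(Fin.snoc v (- ∑ j, v j) : Fin (m+1) → ℝ) i| < P i) ?_ ?_ i
        · show |(Fin.snoc v (- ∑ j, v j) : Fin (m+1) → ℝ) (Fin.last m)| < P (Fin.last m)
          rw [Fin.snoc_last, abs_neg]; exact h2
        · intro j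
          show |(Fin.snoc v (- ∑ j, v j) : Fin (m+1) → ℝ) j.castSucc| < P j.castSucc
          rw [Fin.snoc_castSucc]; exact h1 j
      have := abs_lt.mp hlt
      show 0 < P i - (Fin.snoc v (- ∑ j, v j) : Fin (m+1) → ℝ) i
      linarith [this.2]
    · rw [Fin.sum_univ_castSucc]
      simp only [Fin.snoc_castSucc, Fin.snoc_last]
      rw [Finset.sum_sub_distrib, sum_coord P hP.2]
      ring
  · funext i
    simp only [coordOf, Fin.snoc_castSucc]

set_option maxHeartbeats 1000000 in
/-- Minimization of the linear functional `ℓ_P` over the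
ellipsoidal set `A_{Σ_𝐏}(r)`: for all sufficiently small `r > 0` the minimum equals
`−√r·√(V_KL(P‖P₁)+V_KL(P‖P₂))` and is attained at the indicated pair `(T,R)`. -/
theorem min_ell_over_ball {m : ℕ} (hm : 1 ≤ m)
    (P P₁ P₂ : Fin (m+1) → ℝ) (hP : IsPosDist P)
    (h₁ : IsPosDist P₁) (h₂ : IsPosDist P₂) (hne : P₁ ≠ P₂) :
    ∃ r₀ > (0:ℝ), ∀ r : ℝ, 0 < r → r < r₀ →
      IsLeast {v : ℝ | ∃ T R : Fin (m+1) → ℝ, memASigma P T R r ∧ v = ellP P P₁ P₂ T R}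
        (-(Real.sqrt r * Real.sqrt (VKL P P₁ + VKL P P₂))) ∧
      ∃ T R : Fin (m+1) → ℝ, memASigma P T R r ∧
        ellP P P₁ P₂ T R = -(Real.sqrt r * Real.sqrt (VKL P P₁ + VKL P P₂)) ∧
        coordOf T = (fun i => coordOf P i -
          Real.sqrt r * ((SigmaMat P)⁻¹.mulVec (cvec P P₁)) i /
            Real.sqrt ((cvec P P₁) ⬝ᵥ (SigmaMat P)⁻¹.mulVec (cvec P P₁)
              + (cvec P P₂) ⬝ᵥ (SigmaMat P)⁻¹.mulVec (cvec P P₂))) ∧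
        coordOf R = (fun i => coordOf P i -
          Real.sqrt r * ((SigmaMat P)⁻¹.mulVec (cvec P P₂)) i /
            Real.sqrt ((cvec P P₁) ⬝ᵥ (SigmaMat P)⁻¹.mulVec (cvec P P₁)
              + (cvec P P₂) ⬝ᵥ (SigmaMat P)⁻¹.mulVec (cvec P P₂))) := by
  classical
  set c := cvec P P₁ with hcdef
  set d := cvec P P₂ with hddef
  set M := Minv P with hMdef
  have hSM : SigmaMat P * M = 1 := sigma_mul_Minv P hP
  have hinv : (SigmaMat P)⁻¹ = M := sigma_inv P hP
  set wc := M.mulVec c with hwc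
  set wd := M.mulVec d with hwd
  have ha₁ : c ⬝ᵥ wc = VKL P P₁ := VKL_eq_dot P P₁ hP
  have ha₂ : d ⬝ᵥ wd = VKL P P₂ := VKL_eq_dot P P₂ hP
  set S : ℝ := VKL P P₁ + VKL P P₂ with hSdef
  have hV₁ : 0 ≤ VKL P P₁ := VKL_nonneg P P₁ hP
  have hV₂ : 0 ≤ VKL P P₂ := VKL_nonneg P P₂ hP
  have hSpos : 0 < S := by
    rcases lt_or_eq_of_le hV₁ with h | h
    · linarith
    · rcases lt_or_eq_of_le hV₂ with h' | h'
      · linarith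
      · exact absurd ((VKL_eq_zero P P₁ hP h₁ h.symm).symm.trans
          (VKL_eq_zero P P₂ hP h₂ h'.symm)) hne
  have hsS : 0 < Real.sqrt S := Real.sqrt_pos.mpr hSpos
  have hSwc : (SigmaMat P).mulVec wc = c := by
    rw [hwc, Matrix.mulVec_mulVec, hSM, Matrix.one_mulVec]
  have hSwd : (SigmaMat P).mulVec wd = d := by
    rw [hwd, Matrix.mulVec_mulVec, hSM, Matrix.one_mulVec]
  have hqwc : quadForm (SigmaMat P) wc = VKL P P₁ := by
    show wc ⬝ᵥ (SigmaMat P).mulVec wc = _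
    rw [hSwc, dotProduct_comm]; exact ha₁
  have hqwd : quadForm (SigmaMat P) wd = VKL P P₂ := by
    show wd ⬝ᵥ (SigmaMat P).mulVec wd = _
    rw [hSwd, dotProduct_comm]; exact ha₂
  -- bounds for the construction
  set K : ℝ := (∑ i, |wc i| + ∑ i, |wd i|) / Real.sqrt S + 1 with hKdef
  have hKpos : 0 < K := by
    have : 0 ≤ (∑ i, |wc i| + ∑ i, |wd i|) / Real.sqrt S :=
      div_nonneg (by positivity) hsS.le
    rw [hKdef]; linarith
  have habs : 0 ≤ ∑ i, |wd i| := Finset.sum_nonneg fun i _ => abs_nonneg _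
  have habs' : 0 ≤ ∑ i, |wc i| := Finset.sum_nonneg fun i _ => abs_nonneg _
  have hbc : ∀ i, |wc i| / Real.sqrt S ≤ K := by
    intro i
    have h1 : |wc i| ≤ ∑ j, |wc j| :=
      Finset.single_le_sum (f := fun j => |wc j|) (fun j _ => abs_nonneg _) (Finset.mem_univ i)
    have h2 : |wc i| / Real.sqrt S ≤ (∑ j, |wc j| + ∑ j, |wd j|) / Real.sqrt S :=
      div_le_div_of_nonneg_right (by linarith) hsS.le
    rw [hKdef]; linarith
  have hbd : ∀ i, |wd i| / Real.sqrt S ≤ K := by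
    intro i
    have h1 : |wd i| ≤ ∑ j, |wd j| :=
      Finset.single_le_sum (f := fun j => |wd j|) (fun j _ => abs_nonneg _) (Finset.mem_univ i)
    have h2 : |wd i| / Real.sqrt S ≤ (∑ j, |wc j| + ∑ j, |wd j|) / Real.sqrt S :=
      div_le_div_of_nonneg_right (by linarith) hsS.le
    rw [hKdef]; linarith
  have hbsc : (∑ i, |wc i|) / Real.sqrt S ≤ K := by
    have h2 : (∑ j, |wc j|) / Real.sqrt S ≤ (∑ j, |wc j| + ∑ j, |wd j|) / Real.sqrt S :=
      div_le_div_of_nonneg_right (by linarith) hsS.le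
    rw [hKdef]; linarith
  have hbsd : (∑ i, |wd i|) / Real.sqrt S ≤ K := by
    have h2 : (∑ j, |wd j|) / Real.sqrt S ≤ (∑ j, |wc j| + ∑ j, |wd j|) / Real.sqrt S :=
      div_le_div_of_nonneg_right (by linarith) hsS.le
    rw [hKdef]; linarith
  -- minimum of P
  have hne' : (Finset.univ : Finset (Fin (m+1))).Nonempty := ⟨0, Finset.mem_univ 0⟩
  set εP : ℝ := Finset.univ.inf' hne' P with hεdef
  have hεle : ∀ i, εP ≤ P i := fun i => Finset.inf'_le P (Finset.mem_univ i)
  have hεpos : 0 < εP := by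
    obtain ⟨i₀, -, hi₀⟩ := Finset.exists_mem_eq_inf' hne' P
    rw [hεdef, hi₀]; exact hP.1 i₀
  refine ⟨(εP / (2*K))^2, pow_pos (div_pos hεpos (by linarith)) 2, fun r hr hrlt => ?_⟩
  -- key smallness bound
  have hsrK : Real.sqrt r * K < εP / 2 := by
    have h1 : Real.sqrt r < εP / (2*K) := by
      have h2 : Real.sqrt r < Real.sqrt ((εP / (2*K))^2) := Real.sqrt_lt_sqrt hr.le hrlt
      rwa [Real.sqrt_sq (by positivity)] at h2
    have h3 : Real.sqrt r * K < (εP / (2*K)) * K := mul_lt_mul_of_pos_right h1 hKpos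
    have h4 : (εP / (2*K)) * K = εP / 2 := by
      field_simp [hKpos.ne']
    linarith
  have hsr0 : 0 ≤ Real.sqrt r := Real.sqrt_nonneg r
  -- the minimizer
  set sc : ℝ := Real.sqrt r / Real.sqrt S with hscdef
  have hsc0 : 0 ≤ sc := div_nonneg hsr0 hsS.le
  have hkey : ∀ w : Fin m → ℝ, (∀ i, |w i| / Real.sqrt S ≤ K) →
      ((∑ i, |w i|) / Real.sqrt S ≤ K) →
      (∀ i : Fin m, |(sc • w) i| < P i.castSucc) ∧ |∑ i, (sc • w) i| < P (Fin.last m) := by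
    intro w hw hws
    have hgen : ∀ x : ℝ, x / Real.sqrt S ≤ K → 0 ≤ x → sc * x < εP / 2 := by
      intro x hx hx0
      have e : sc * x = Real.sqrt r * (x / Real.sqrt S) := by
        rw [hscdef]; ring
      rw [e]
      calc Real.sqrt r * (x / Real.sqrt S) ≤ Real.sqrt r * K :=
            mul_le_mul_of_nonneg_left hx hsr0
        _ < εP / 2 := hsrK
    constructor
    · intro i
      have h5 : |(sc • w) i| = sc * |w i| := by
        simp only [Pi.smul_apply, smul_eq_mul, abs_mul, abs_of_nonneg hsc0]
      rw [h5]
      have := hgen (|w i|) (hw i) (abs_nonneg _)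
      have h6 := hεle i.castSucc
      linarith [hεpos]
    · have h5 : |∑ i, (sc • w) i| ≤ sc * ∑ i, |w i| := by
        calc |∑ i, (sc • w) i| ≤ ∑ i, |(sc • w) i| := Finset.abs_sum_le_sum_abs _ _
          _ = ∑ i, sc * |w i| := by
              refine Finset.sum_congr rfl fun i _ => ?_
              simp only [Pi.smul_apply, smul_eq_mul, abs_mul, abs_of_nonneg hsc0]
          _ = sc * ∑ i, |w i| := by rw [Finset.mul_sum]
      have := hgen (∑ i, |w i|) hws (Finset.sum_nonneg fun i _ => abs_nonneg _)
      have h6 := hεle (Fin.last m)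
      linarith [hεpos]
  obtain ⟨hTpos, hTcoord⟩ := construct_pos P hP (sc • wc) (hkey wc hbc hbsc).1 (hkey wc hbc hbsc).2
  obtain ⟨hRpos, hRcoord⟩ := construct_pos P hP (sc • wd) (hkey wd hbd hbsd).1 (hkey wd hbd hbsd).2
  set T : Fin (m+1) → ℝ :=
    fun i => P i - (Fin.snoc (sc • wc) (- ∑ j, (sc • wc) j) : Fin (m+1) → ℝ) i with hTdef
  set R : Fin (m+1) → ℝ :=
    fun i => P i - (Fin.snoc (sc • wd) (- ∑ j, (sc • wd) j) : Fin (m+1) → ℝ) i with hRdef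
  have hdiffT : (fun i => coordOf T i - coordOf P i) = (-sc) • wc := by
    funext i
    rw [hTcoord]
    simp only [Pi.smul_apply, smul_eq_mul, coordOf]
    ring
  have hdiffR : (fun i => coordOf R i - coordOf P i) = (-sc) • wd := by
    funext i
    rw [hRcoord]
    simp only [Pi.smul_apply, smul_eq_mul, coordOf]
    ring
  have hsc2 : sc^2 = r / S := by
    rw [hscdef, div_pow, Real.sq_sqrt hr.le, Real.sq_sqrt hSpos.le]
  have hquadT : quadForm (SigmaMat P) (fun i => coordOf T i - coordOf P i)
      = (r / S) * VKL P P₁ := by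
    rw [hdiffT, quadForm_smul, hqwc, neg_pow, ← hsc2]; ring
  have hquadR : quadForm (SigmaMat P) (fun i => coordOf R i - coordOf P i)
      = (r / S) * VKL P P₂ := by
    rw [hdiffR, quadForm_smul, hqwd, neg_pow, ← hsc2]; ring
  have hmem : memASigma P T R r := by
    refine ⟨hTpos, hRpos, ?_⟩
    rw [hquadT, hquadR]
    have : r / S * VKL P P₁ + r / S * VKL P P₂ = r := by
      field_simp
      ring
    linarith
  have hscS : sc * S = Real.sqrt r * Real.sqrt S := by
    have e : sc * S = Real.sqrt r * (S / Real.sqrt S) := by rw [hscdef]; ring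
    rw [e, Real.div_sqrt]
  have hval : ellP P P₁ P₂ T R = -(Real.sqrt r * Real.sqrt S) := by
    rw [ellP_eq P P₁ P₂ T R hTpos.2 hRpos.2 hP.2, hdiffT, hdiffR,
      dotProduct_smul, dotProduct_smul, ha₁, ha₂]
    simp only [smul_eq_mul]
    rw [← hscS, hSdef]
    ring
  -- the coordinate formulas
  have hcoordT : coordOf T = fun i => coordOf P i -
      Real.sqrt r * ((SigmaMat P)⁻¹.mulVec c) i /
        Real.sqrt (c ⬝ᵥ (SigmaMat P)⁻¹.mulVec c + d ⬝ᵥ (SigmaMat P)⁻¹.mulVec d) := by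
    rw [hTcoord, hinv]
    funext i
    rw [← hwc, ha₁, ha₂, ← hSdef]
    simp only [Pi.smul_apply, smul_eq_mul]
    rw [hscdef]
    ring
  have hcoordR : coordOf R = fun i => coordOf P i -
      Real.sqrt r * ((SigmaMat P)⁻¹.mulVec d) i /
        Real.sqrt (c ⬝ᵥ (SigmaMat P)⁻¹.mulVec c + d ⬝ᵥ (SigmaMat P)⁻¹.mulVec d) := by
    rw [hRcoord, hinv]
    funext i
    rw [← hwc, ← hwd, ha₁, ha₂, ← hSdef]
    simp only [Pi.smul_apply, smul_eq_mul]
    rw [hscdef]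
    ring
  -- lower bound
  have hlow : ∀ v ∈ {v : ℝ | ∃ T R : Fin (m+1) → ℝ,
      memASigma P T R r ∧ v = ellP P P₁ P₂ T R},
      -(Real.sqrt r * Real.sqrt S) ≤ v := by
    rintro v ⟨T', R', ⟨hT'pos, hR'pos, hquad⟩, rfl⟩
    set u : Fin m → ℝ := fun i => coordOf T' i - coordOf P i with hu
    set u' : Fin m → ℝ := fun i => coordOf R' i - coordOf P i with hu'
    have hq1 : 0 ≤ quadForm (SigmaMat P) u := quadForm_sigma_nonneg P hP u
    have hq2 : 0 ≤ quadForm (SigmaMat P) u' := quadForm_sigma_nonneg P hP u'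
    have hcu : c ⬝ᵥ u = wc ⬝ᵥ (SigmaMat P).mulVec u := by
      rw [← hSwc, dotProduct_comm, dot_sigma_comm]
    have hdu : d ⬝ᵥ u' = wd ⬝ᵥ (SigmaMat P).mulVec u' := by
      rw [← hSwd, dotProduct_comm, dot_sigma_comm]
    have h1 : -(Real.sqrt (VKL P P₁) * Real.sqrt (quadForm (SigmaMat P) u)) ≤ c ⬝ᵥ u := by
      rw [hcu]
      have := neg_sqrt_le_dot P hP wc u
      rwa [hqwc] at this
    have h2 : -(Real.sqrt (VKL P P₂) * Real.sqrt (quadForm (SigmaMat P) u')) ≤ d ⬝ᵥ u' := by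
      rw [hdu]
      have := neg_sqrt_le_dot P hP wd u'
      rwa [hqwd] at this
    have h3 := sqrt_cs (VKL P P₁) (VKL P P₂) (quadForm (SigmaMat P) u)
      (quadForm (SigmaMat P) u') hV₁ hV₂ hq1 hq2
    have h4 : Real.sqrt (quadForm (SigmaMat P) u + quadForm (SigmaMat P) u')
        ≤ Real.sqrt r := Real.sqrt_le_sqrt hquad
    have h5 : Real.sqrt (VKL P P₁ + VKL P P₂) *
          Real.sqrt (quadForm (SigmaMat P) u + quadForm (SigmaMat P) u')
        ≤ Real.sqrt (VKL P P₁ + VKL P P₂) * Real.sqrt r :=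
      mul_le_mul_of_nonneg_left h4 (Real.sqrt_nonneg _)
    rw [ellP_eq P P₁ P₂ T' R' hT'pos.2 hR'pos.2 hP.2, ← hu, ← hu', ← hcdef, ← hddef]
    have hcomm : Real.sqrt (VKL P P₁ + VKL P P₂) * Real.sqrt r
        = Real.sqrt r * Real.sqrt S := by rw [hSdef]; ring
    linarith
  exact ⟨⟨⟨T, R, hmem, hval.symm⟩, hlow⟩, T, R, hmem, hval, hcoordT, hcoordR⟩
end TwoSampleTest
end

section
/- Let P_1 ≠ P_2 ∈ 𝒫(𝒵), let P* be the normalized geometric mean of P_1 and P_2, and let {r̃_n} be a sequence of positive thresholds with r̃_n = Θ(1/n). For each n, let (Γ'_n, Γ''_n) be a pair of distributions minimizing ℓ_{P*}(T,R) over all (T,R) ∈ A_{Σ_{𝐏*}}(r̃_n). Then there exist Ñ ∈ ℕ and a constant κ > 0 such that for every n ≥ Ñ there exists a pair of type distributions (P'_n, P''_n) with denominator n lying in A_{Σ_{𝐏*}}(r̃_n) and satisfying |n·ℓ_{P*}(Γ'_n,Γ''_n) − n·ℓ_{P*}(P'_n,P''_n)| ≤ κ. -/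
open scoped BigOperators
open Filter MeasureTheory Matrix

namespace TwoSampleTest

variable {m : ℕ}

/-!
Contract both components of the pair towards `P` by the factor `1 - t` and round them to types
with denominator `n`. On differences of distributions the quadratic form of `Σ_P` is the χ² form
`∑ dᵢ² / Pᵢ`: the contraction frees a slack `t r` in it, while by Young's inequality a rounding
error of size `m / n` costs only `O(1 / (t n²))`, so `t ≍ 1 / (n √r)` makes both fit. Every
coordinate then moves by `t √r + m / n = O(1 / n)`, and `ℓ_P` is linear, so `n ℓ_P` changes by
`O(1)`. Once `r ≤ c₂ / n` is below `min P`, the χ² bound also keeps the types strictly positive.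
-/

noncomputable def chiSqForm (P d : Fin (m+1) → ℝ) : ℝ := ∑ i, d i ^ 2 / P i

lemma quadForm_sigmaMat (P : Fin (m+1) → ℝ) (v : Fin m → ℝ) :
    quadForm (SigmaMat P) v
      = ∑ i, v i ^ 2 / P i.castSucc + (∑ i, v i) ^ 2 / P (Fin.last m) := by
  have hmulVec : ∀ i,
      (SigmaMat P).mulVec v i = v i / P i.castSucc + (∑ j, v j) / P (Fin.last m) := by
    intro i
    have h : ∀ j, SigmaMat P i j * v j
        = (if i = j then v j / P i.castSucc else 0) + v j / P (Fin.last m) := by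
      intro j
      by_cases hij : i = j <;> simp [SigmaMat, hij] <;> ring
    simp only [Matrix.mulVec, dotProduct, h, Finset.sum_add_distrib, Finset.sum_ite_eq,
      Finset.mem_univ, if_true, Finset.sum_div]
  simp only [quadForm, dotProduct, hmulVec, mul_add, Finset.sum_add_distrib, ← Finset.sum_mul]
  congr 1
  · exact Finset.sum_congr rfl fun i _ => by ring
  · ring

lemma quadForm_sigmaMat_coord_sub {P T : Fin (m+1) → ℝ} (hP : ∑ i, P i = 1)
    (hT : ∑ i, T i = 1) :
    quadForm (SigmaMat P) (fun i => coordOf T i - coordOf P i) = chiSqForm P (T - P) := by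
  have hlast : T (Fin.last m) - P (Fin.last m) = -∑ i : Fin m, (T i.castSucc - P i.castSucc) := by
    rw [Fin.sum_univ_castSucc] at hP hT
    rw [Finset.sum_sub_distrib]
    linarith
  rw [quadForm_sigmaMat, chiSqForm, Fin.sum_univ_castSucc]
  simp only [coordOf, Pi.sub_apply, hlast, neg_sq]

lemma memASigma_iff {P T R : Fin (m+1) → ℝ} {r : ℝ} (hP : ∑ i, P i = 1) :
    memASigma P T R r ↔
      IsPosDist T ∧ IsPosDist R ∧ chiSqForm P (T - P) + chiSqForm P (R - P) ≤ r := by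
  refine and_congr_right fun hT => and_congr_right fun hR => ?_
  rw [quadForm_sigmaMat_coord_sub hP hT.2, quadForm_sigmaMat_coord_sub hP hR.2]

lemma IsPosDist.isDist {P : Fin (m+1) → ℝ} (hP : IsPosDist P) : IsDist P :=
  ⟨fun i => (hP.1 i).le, hP.2⟩

lemma IsPosDist.le_one {P : Fin (m+1) → ℝ} (hP : IsPosDist P) (i : Fin (m+1)) : P i ≤ 1 :=
  hP.2 ▸ Finset.single_le_sum (fun j _ => (hP.1 j).le) (Finset.mem_univ i)

lemma IsDist.add_smul_sub {P Γ : Fin (m+1) → ℝ} (hP : IsDist P) (hΓ : IsDist Γ) {θ : ℝ}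
    (hθ₀ : 0 ≤ θ) (hθ₁ : θ ≤ 1) : IsDist (P + θ • (Γ - P)) := by
  refine ⟨fun i => ?_, ?_⟩
  · have h : (P + θ • (Γ - P)) i = (1 - θ) * P i + θ * Γ i := by
      simp only [Pi.add_apply, Pi.smul_apply, Pi.sub_apply, smul_eq_mul]
      ring
    rw [h]
    exact add_nonneg (mul_nonneg (by linarith) (hP.1 i)) (mul_nonneg hθ₀ (hΓ.1 i))
  · simp only [Pi.add_apply, Pi.smul_apply, Pi.sub_apply, smul_eq_mul, Finset.sum_add_distrib,
      ← Finset.mul_sum, Finset.sum_sub_distrib, hP.2, hΓ.2]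
    ring

lemma isPosDist_pstar {P₁ P₂ : Fin (m+1) → ℝ} (h₁ : IsPosDist P₁) (h₂ : IsPosDist P₂) :
    IsPosDist (Pstar P₁ P₂) := by
  have hsqrt : ∀ i, 0 < Real.sqrt (P₁ i * P₂ i) := fun i =>
    Real.sqrt_pos.mpr (mul_pos (h₁.1 i) (h₂.1 i))
  have hsum : 0 < ∑ j, Real.sqrt (P₁ j * P₂ j) :=
    Finset.sum_pos (fun j _ => hsqrt j) Finset.univ_nonempty
  refine ⟨fun i => div_pos (hsqrt i) hsum, ?_⟩
  unfold Pstar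
  rw [← Finset.sum_div, div_self hsum.ne']

section chiSqForm

variable {P T : Fin (m+1) → ℝ}

lemma chiSqForm_nonneg (hP : ∀ i, 0 < P i) (d : Fin (m+1) → ℝ) : 0 ≤ chiSqForm P d :=
  Finset.sum_nonneg fun i _ => div_nonneg (sq_nonneg _) (hP i).le

lemma chiSqForm_smul (θ : ℝ) (d : Fin (m+1) → ℝ) :
    chiSqForm P (θ • d) = θ ^ 2 * chiSqForm P d := by
  simp only [chiSqForm, Finset.mul_sum, Pi.smul_apply, smul_eq_mul]
  exact Finset.sum_congr rfl fun i _ => by ring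

lemma chiSqForm_add_le (hP : ∀ i, 0 < P i) {t : ℝ} (ht : 0 < t) (d e : Fin (m+1) → ℝ) :
    chiSqForm P (d + e) ≤ (1 + t) * chiSqForm P d + (1 + t⁻¹) * chiSqForm P e := by
  have young : ∀ a b : ℝ, (a + b) ^ 2 ≤ (1 + t) * a ^ 2 + (1 + t⁻¹) * b ^ 2 := by
    intro a b
    have h : (1 + t) * a ^ 2 + (1 + t⁻¹) * b ^ 2 - (a + b) ^ 2 = (t * a - b) ^ 2 / t := by
      field_simp
      ring
    nlinarith [div_nonneg (sq_nonneg (t * a - b)) ht.le]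
  simp only [chiSqForm, Finset.mul_sum, ← Finset.sum_add_distrib]
  refine Finset.sum_le_sum fun i _ => ?_
  rw [mul_div_assoc', mul_div_assoc', ← add_div, Pi.add_apply]
  exact div_le_div_of_nonneg_right (young _ _) (hP i).le

lemma sq_le_mul_chiSqForm (hP : ∀ i, 0 < P i) (d : Fin (m+1) → ℝ) (i : Fin (m+1)) :
    d i ^ 2 ≤ P i * chiSqForm P d := by
  rw [← div_le_iff₀' (hP i)]
  exact Finset.single_le_sum (f := fun j => d j ^ 2 / P j)
    (fun j _ => div_nonneg (sq_nonneg _) (hP j).le) (Finset.mem_univ i)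

lemma chiSqForm_le_of_abs_le (hP : ∀ i, 0 < P i) {d : Fin (m+1) → ℝ} {c : ℝ}
    (hd : ∀ i, |d i| ≤ c) : chiSqForm P d ≤ c ^ 2 * ∑ i, 1 / P i := by
  rw [chiSqForm, Finset.mul_sum]
  refine Finset.sum_le_sum fun i _ => ?_
  rw [mul_one_div]
  refine div_le_div_of_nonneg_right ?_ (hP i).le
  rw [← sq_abs]
  exact pow_le_pow_left₀ (abs_nonneg _) (hd i) 2

lemma sq_le_chiSqForm (hP : IsPosDist P) (d : Fin (m+1) → ℝ)
    (i : Fin (m+1)) : d i ^ 2 ≤ chiSqForm P d :=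
  (sq_le_mul_chiSqForm hP.1 d i).trans
    (mul_le_of_le_one_left (chiSqForm_nonneg hP.1 d) (hP.le_one i))

lemma pos_of_chiSqForm_sub_lt (hP : ∀ i, 0 < P i) {i : Fin (m+1)}
    (h : chiSqForm P (T - P) < P i) : 0 < T i := by
  have hsq := sq_le_mul_chiSqForm hP (T - P) i
  rw [Pi.sub_apply] at hsq
  by_contra! hT
  nlinarith [hP i, mul_lt_mul_of_pos_left h (hP i)]

end chiSqForm

lemma abs_ellP_sub_ellP_le {P P₁ P₂ T R T' R' : Fin (m+1) → ℝ} {c : ℝ}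
    (hT : ∀ i, |T i - T' i| ≤ c) (hR : ∀ i, |R i - R' i| ≤ c) :
    |ellP P P₁ P₂ T R - ellP P P₁ P₂ T' R'|
      ≤ c * ∑ i, (|Real.log (P i / P₁ i)| + |Real.log (P i / P₂ i)|) := by
  have hsub : ellP P P₁ P₂ T R - ellP P P₁ P₂ T' R'
      = ∑ i, ((T i - T' i) * Real.log (P i / P₁ i) + (R i - R' i) * Real.log (P i / P₂ i)) := by
    simp only [ellP, Finset.sum_add_distrib]
    rw [add_sub_add_comm, ← Finset.sum_sub_distrib, ← Finset.sum_sub_distrib]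
    congr 1 <;> exact Finset.sum_congr rfl fun i _ => by ring
  rw [hsub, Finset.mul_sum]
  refine (Finset.abs_sum_le_sum_abs _ _).trans (Finset.sum_le_sum fun i _ => ?_)
  refine (abs_add_le _ _).trans ?_
  rw [abs_mul, abs_mul, mul_add]
  exact add_le_add (mul_le_mul_of_nonneg_right (hT i) (abs_nonneg _))
    (mul_le_mul_of_nonneg_right (hR i) (abs_nonneg _))

/-- Round the first `m` coordinates down to multiples of `1 / n` and put the remaining mass
on the last one; each coordinate moves by less than `1 / n`, so the last by at most `m / n`. -/
lemma exists_isTypeDist_abs_sub_le {n : ℕ} (hn : 0 < n) {Q : Fin (m+1) → ℝ} (hQ : IsDist Q) :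
    ∃ T, IsTypeDist n T ∧ ∀ i, |T i - Q i| ≤ m / n := by
  have hnR : (0 : ℝ) < n := Nat.cast_pos.mpr hn
  set a : Fin m → ℕ := fun j => ⌊(n : ℝ) * Q j.castSucc⌋₊
  have ha : ∀ j, Q j.castSucc - 1 / n < a j / n ∧ (a j : ℝ) / n ≤ Q j.castSucc := by
    intro j
    have h₀ : 0 ≤ (n : ℝ) * Q j.castSucc := mul_nonneg hnR.le (hQ.1 _)
    constructor
    · rw [sub_lt_iff_lt_add, ← add_div, lt_div_iff₀ hnR]
      linarith [Nat.lt_floor_add_one ((n : ℝ) * Q j.castSucc)]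
    · rw [div_le_iff₀ hnR]
      linarith [Nat.floor_le h₀]
  have hQsum : ∑ j : Fin m, Q j.castSucc = 1 - Q (Fin.last m) := by
    rw [← hQ.2, Fin.sum_univ_castSucc]
    ring
  have hS : ∑ j, a j ≤ n := by
    have h : (∑ j, a j : ℝ) / n ≤ 1 := by
      rw [Finset.sum_div]
      linarith [Finset.sum_le_sum fun j (_ : j ∈ Finset.univ) => (ha j).2, hQ.1 (Fin.last m)]
    exact_mod_cast (div_le_one hnR).mp h
  set b : Fin (m+1) → ℕ := Fin.snoc a (n - ∑ j, a j)
  have hb : ∑ i, b i = n := by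
    simp only [b, Fin.sum_univ_castSucc, Fin.snoc_castSucc, Fin.snoc_last]
    omega
  set T : Fin (m+1) → ℝ := fun i => b i / n
  have hTsum : ∑ i, T i = 1 := by
    rw [← Finset.sum_div, ← Nat.cast_sum, hb, div_self hnR.ne']
  have hlast : T (Fin.last m) - Q (Fin.last m) = ∑ j : Fin m, (Q j.castSucc - T j.castSucc) := by
    rw [Fin.sum_univ_castSucc] at hTsum
    rw [Finset.sum_sub_distrib]
    linarith
  refine ⟨T, ⟨⟨fun i => by positivity, hTsum⟩, fun i => ⟨b i, rfl⟩⟩, fun i => ?_⟩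
  refine Fin.lastCases ?_ (fun j => ?_) i
  · rw [hlast, abs_le]
    have hj : ∀ j : Fin m, 0 ≤ Q j.castSucc - T j.castSucc ∧ Q j.castSucc - T j.castSucc ≤ 1 / n :=
      fun j => by
        simp only [T, b, Fin.snoc_castSucc]
        constructor <;> linarith [ha j]
    have hup := Finset.sum_le_sum fun j (_ : j ∈ Finset.univ) => (hj j).2
    simp only [Finset.sum_const, Finset.card_univ, Fintype.card_fin, nsmul_eq_mul,
      mul_one_div] at hup
    constructor <;> linarith [Finset.sum_nonneg fun j (_ : j ∈ Finset.univ) => (hj j).1,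
      div_nonneg (Nat.cast_nonneg m) hnR.le]
  · have hm : (1 : ℝ) ≤ m := Nat.one_le_cast.mpr j.pos
    have h1m : 1 / (n : ℝ) ≤ m / n := div_le_div_of_nonneg_right hm hnR.le
    simp only [T, b, Fin.snoc_castSucc]
    rw [abs_le]
    constructor <;> linarith [ha j]

lemma exists_isTypeDist_near_contraction {P Γ : Fin (m+1) → ℝ} (hP : IsPosDist P)
    (hΓ : IsDist Γ) {r : ℝ} (hΓr : chiSqForm P (Γ - P) ≤ r) {n : ℕ} (hn : 0 < n) {t : ℝ}
    (ht₀ : 0 < t) (ht₁ : t ≤ 1) :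
    ∃ T, IsTypeDist n T ∧
      chiSqForm P (T - P)
        ≤ (1 - t) * chiSqForm P (Γ - P) + (1 + t⁻¹) * ((m / n) ^ 2 * ∑ i, 1 / P i) ∧
      ∀ i, |Γ i - T i| ≤ t * √r + m / n := by
  set Q := P + (1 - t) • (Γ - P)
  obtain ⟨T, hT, hTQ⟩ :=
    exists_isTypeDist_abs_sub_le hn
      (hP.isDist.add_smul_sub hΓ (θ := 1 - t) (by linarith) (by linarith))
  refine ⟨T, hT, ?_, fun i => ?_⟩
  · have hsplit : T - P = (1 - t) • (Γ - P) + (T - Q) := by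
      simp only [Q]
      abel
    have hcontract : (1 + t) * (1 - t) ^ 2 ≤ 1 - t := by
      nlinarith [mul_nonneg (sub_nonneg.2 ht₁) (sq_nonneg t)]
    calc chiSqForm P (T - P)
        ≤ (1 + t) * ((1 - t) ^ 2 * chiSqForm P (Γ - P)) + (1 + t⁻¹) * chiSqForm P (T - Q) := by
          rw [hsplit, ← chiSqForm_smul]
          exact chiSqForm_add_le hP.1 ht₀ _ _
      _ ≤ _ := by
          rw [← mul_assoc]
          gcongr
          · exact chiSqForm_nonneg hP.1 _
          · exact chiSqForm_le_of_abs_le hP.1 hTQ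
  · have hΓT : Γ i - T i = t * (Γ i - P i) - (T i - Q i) := by
      simp only [Q, Pi.add_apply, Pi.smul_apply, Pi.sub_apply, smul_eq_mul]
      ring
    have hΓP : |Γ i - P i| ≤ √r := Real.abs_le_sqrt ((sq_le_chiSqForm hP (Γ - P) i).trans hΓr)
    rw [hΓT]
    refine (abs_sub _ _).trans (add_le_add ?_ (hTQ i))
    rw [abs_mul, abs_of_pos ht₀]
    exact mul_le_mul_of_nonneg_left hΓP ht₀.le

lemma one_add_inv_mul_two_mul_le {t r E : ℝ} (ht₀ : 0 < t) (ht₁ : t ≤ 1) (hE : 0 ≤ E)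
    (h : 4 * E ≤ t ^ 2 * r) : (1 + t⁻¹) * (2 * E) ≤ t * r := by
  have ht : 1 ≤ t⁻¹ := (one_le_inv₀ ht₀).2 ht₁
  calc (1 + t⁻¹) * (2 * E) ≤ 2 * t⁻¹ * (2 * E) := by gcongr; linarith
    _ = t⁻¹ * (4 * E) := by ring
    _ ≤ t⁻¹ * (t ^ 2 * r) := by gcongr
    _ = t * r := by field_simp

lemma exists_isTypeDist_pair_near {P P₁ P₂ Γ' Γ'' : Fin (m+1) → ℝ} (hP : IsPosDist P)
    {r L : ℝ} {n : ℕ} (hn : 0 < n) (hΓ : memASigma P Γ' Γ'' r) (hrP : ∀ i, r < P i)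
    (hL : 0 < L) (hLW : 4 * m ^ 2 * ∑ i, 1 / P i ≤ L ^ 2) (hLr : L ^ 2 ≤ n ^ 2 * r) :
    ∃ T R, IsTypeDist n T ∧ IsTypeDist n R ∧ memASigma P T R r ∧
      |(n : ℝ) * ellP P P₁ P₂ Γ' Γ'' - n * ellP P P₁ P₂ T R|
        ≤ (L + m) * ∑ i, (|Real.log (P i / P₁ i)| + |Real.log (P i / P₂ i)|) := by
  rw [memASigma_iff hP.2] at hΓ
  obtain ⟨hΓ', hΓ'', hΓr⟩ := hΓ
  have hχΓ' := chiSqForm_nonneg hP.1 (Γ' - P)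
  have hχΓ'' := chiSqForm_nonneg hP.1 (Γ'' - P)
  have hnR : (0 : ℝ) < n := Nat.cast_pos.mpr hn
  have hr : 0 < r := pos_of_mul_pos_right ((pow_pos hL 2).trans_le hLr) (by positivity)
  set t := L / (n * √r)
  have ht₀ : 0 < t := by positivity
  have ht₁ : t ≤ 1 := by
    rw [div_le_one (by positivity), ← Real.sqrt_sq hnR.le, ← Real.sqrt_mul (sq_nonneg _)]
    exact Real.le_sqrt_of_sq_le hLr
  have htr : t * √r = L / n := by
    rw [eq_div_iff hnR.ne', mul_assoc, mul_comm (√r)]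
    exact div_mul_cancel₀ _ (by positivity)
  have hW : 0 ≤ ∑ i, 1 / P i := Finset.sum_nonneg fun i _ => (one_div_pos.mpr (hP.1 i)).le
  -- the rounding errors of both components fit into the slack `t * r` left by the contraction
  have hslack : (1 + t⁻¹) * (2 * ((m / n) ^ 2 * ∑ i, 1 / P i)) ≤ t * r := by
    refine one_add_inv_mul_two_mul_le ht₀ ht₁ (by positivity) ?_
    calc 4 * ((m / n) ^ 2 * ∑ i, 1 / P i) = 4 * m ^ 2 * (∑ i, 1 / P i) / n ^ 2 := by ring
      _ ≤ L ^ 2 / n ^ 2 := by gcongr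
      _ = t ^ 2 * r := by rw [← div_pow, ← htr, mul_pow, Real.sq_sqrt hr.le]
  obtain ⟨T, hT, hTχ, hΓT⟩ :=
    exists_isTypeDist_near_contraction hP hΓ'.isDist (r := r) (by linarith) hn ht₀ ht₁
  obtain ⟨R, hR, hRχ, hΓR⟩ :=
    exists_isTypeDist_near_contraction hP hΓ''.isDist (r := r) (by linarith) hn ht₀ ht₁
  have hχ : chiSqForm P (T - P) + chiSqForm P (R - P) ≤ r := by
    nlinarith [mul_le_mul_of_nonneg_left hΓr (by linarith : 0 ≤ 1 - t)]
  have hχT := chiSqForm_nonneg hP.1 (T - P)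
  have hχR := chiSqForm_nonneg hP.1 (R - P)
  refine ⟨T, R, hT, hR, (memASigma_iff hP.2).2
    ⟨⟨fun i => pos_of_chiSqForm_sub_lt hP.1 (by linarith [hrP i]), hT.1.2⟩,
      ⟨fun i => pos_of_chiSqForm_sub_lt hP.1 (by linarith [hrP i]), hR.1.2⟩, hχ⟩, ?_⟩
  rw [← mul_sub, abs_mul, Nat.abs_cast]
  calc (n : ℝ) * |ellP P P₁ P₂ Γ' Γ'' - ellP P P₁ P₂ T R|
      ≤ n * ((t * √r + m / n) * ∑ i, (|Real.log (P i / P₁ i)| + |Real.log (P i / P₂ i)|)) := by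
        gcongr
        exact abs_ellP_sub_ellP_le hΓT hΓR
    _ = _ := by
        rw [htr]
        field_simp

theorem type_approx_minimizer_general {m : ℕ}
    (P₁ P₂ : Fin (m+1) → ℝ) (h₁ : IsPosDist P₁) (h₂ : IsPosDist P₂)
    (rt : ℕ → ℝ)
    (hΘ : ∃ c₁ > (0:ℝ), ∃ c₂ > (0:ℝ), ∃ N : ℕ, ∀ n ≥ N,
      c₁ / n ≤ rt n ∧ rt n ≤ c₂ / n)
    (Γ' Γ'' : ℕ → Fin (m+1) → ℝ)
    (hΓmem : ∀ n, memASigma (Pstar P₁ P₂) (Γ' n) (Γ'' n) (rt n)) :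
    ∃ Ntilde : ℕ, ∃ κ > (0:ℝ), ∀ n ≥ Ntilde, ∃ P' P'' : Fin (m+1) → ℝ,
      IsTypeDist n P' ∧ IsTypeDist n P'' ∧
      memASigma (Pstar P₁ P₂) P' P'' (rt n) ∧
      |(n : ℝ) * ellP (Pstar P₁ P₂) P₁ P₂ (Γ' n) (Γ'' n)
        - (n : ℝ) * ellP (Pstar P₁ P₂) P₁ P₂ P' P''| ≤ κ := by
  obtain ⟨c₁, hc₁, c₂, -, N, hN⟩ := hΘ
  set P := Pstar P₁ P₂
  have hP : IsPosDist P := isPosDist_pstar h₁ h₂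
  set W := ∑ i, 1 / P i
  set L := 2 * m * √W + 1
  have hLW : 4 * m ^ 2 * W ≤ L ^ 2 := by
    have hW : 0 ≤ W := Finset.sum_nonneg fun i _ => (one_div_pos.mpr (hP.1 i)).le
    nlinarith [Real.sq_sqrt hW, Real.sqrt_nonneg W, Nat.cast_nonneg (α := ℝ) m]
  have hlarge : ∀ᶠ n : ℕ in atTop, N ≤ n ∧ 0 < n ∧ L ^ 2 / c₁ ≤ n ∧ ∀ i, c₂ / n < P i :=
    (eventually_ge_atTop N).and <| (eventually_gt_atTop 0).and <|
      (tendsto_natCast_atTop_atTop.eventually_ge_atTop _).and <| eventually_all.2 fun i =>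
        (tendsto_const_div_atTop_nhds_zero_nat c₂).eventually (gt_mem_nhds (hP.1 i))
  obtain ⟨Ntilde, hNtilde⟩ := eventually_atTop.1 hlarge
  refine ⟨Ntilde, (L + m) * ∑ i, (|Real.log (P i / P₁ i)| + |Real.log (P i / P₂ i)|) + 1,
    by positivity, fun n hn => ?_⟩
  obtain ⟨hNn, hn₀, hLc, hc₂P⟩ := hNtilde n hn
  obtain ⟨hr₁, hr₂⟩ := hN n hNn
  have hLr : L ^ 2 ≤ n ^ 2 * rt n := by
    have hnR : (0 : ℝ) < n := Nat.cast_pos.mpr hn₀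
    rw [div_le_iff₀ hc₁] at hLc
    rw [div_le_iff₀' hnR] at hr₁
    nlinarith
  obtain ⟨T, R, hT, hR, hmem, hℓ⟩ := exists_isTypeDist_pair_near hP hn₀ (hΓmem n)
    (fun i => hr₂.trans_lt (hc₂P i)) (by positivity) hLW hLr
  exact ⟨T, R, hT, hR, hmem, hℓ.trans (le_add_of_nonneg_right zero_le_one)⟩

/-- (Existence of nearly-minimizing types.) If `(Γ'_n, Γ''_n)` minimizes
`ℓ_{P*}` over `A_{Σ_{𝐏*}}(r̃_n)` with `r̃_n = Θ(1/n)`, then for all large `n` there is a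
pair of type distributions with denominator `n` in `A_{Σ_{𝐏*}}(r̃_n)` whose value of
`n·ℓ_{P*}` is within a constant `κ` of `n·ℓ_{P*}(Γ'_n,Γ''_n)`. -/
theorem type_approx_minimizer {m : ℕ} (hm : 1 ≤ m)
    (P₁ P₂ : Fin (m+1) → ℝ) (h₁ : IsPosDist P₁) (h₂ : IsPosDist P₂) (hne : P₁ ≠ P₂)
    (rt : ℕ → ℝ) (hrpos : ∀ n, 0 < rt n)
    (hΘ : ∃ c₁ > (0:ℝ), ∃ c₂ > (0:ℝ), ∃ N : ℕ, ∀ n ≥ N,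
      c₁ / n ≤ rt n ∧ rt n ≤ c₂ / n)
    (Γ' Γ'' : ℕ → Fin (m+1) → ℝ)
    (hΓmem : ∀ n, memASigma (Pstar P₁ P₂) (Γ' n) (Γ'' n) (rt n))
    (hΓmin : ∀ n, ∀ T R : Fin (m+1) → ℝ, memASigma (Pstar P₁ P₂) T R (rt n) →
      ellP (Pstar P₁ P₂) P₁ P₂ (Γ' n) (Γ'' n) ≤ ellP (Pstar P₁ P₂) P₁ P₂ T R) :
    ∃ Ntilde : ℕ, ∃ κ > (0:ℝ), ∀ n ≥ Ntilde, ∃ P' P'' : Fin (m+1) → ℝ,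
      IsTypeDist n P' ∧ IsTypeDist n P'' ∧
      memASigma (Pstar P₁ P₂) P' P'' (rt n) ∧
      |(n : ℝ) * ellP (Pstar P₁ P₂) P₁ P₂ (Γ' n) (Γ'' n)
        - (n : ℝ) * ellP (Pstar P₁ P₂) P₁ P₂ P' P''| ≤ κ :=
  type_approx_minimizer_general P₁ P₂ h₁ h₂ rt hΘ Γ' Γ'' hΓmem

end TwoSampleTest
end

section
/- Let D be an invariant divergence on 𝒫(𝒵) with constant η > 0, let P ∈ 𝒫(𝒵), let ε ∈ (0,1), and let X^n, Y^n be independent i.i.d. sequences distributed according to P. Suppose there exist M_0 > 0, N_0 ∈ ℕ, and a positive sequence {δ_n} with δ_n → 0 such that |P^n×P^n((n/2)·D(T_{X^n}‖T_{Y^n}) ≥ c) − Q_{χ²_{k−1}}(c/η)| ≤ M_0·δ_n for all c > 0 and all n ≥ N_0. Define r_{n,ε} = inf{ r > 0 : P^n×P^n(D(T_{X^n}‖T_{Y^n}) ≥ r) ≤ ε }. Then r_{n,ε} = (2η/n)·Q⁻¹_{χ²_{k−1}}(ε) + O(δ_n/n) as n → ∞. -/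
open scoped BigOperators
open Filter MeasureTheory Matrix

namespace TwoSampleTest

variable {m : ℕ}

/-! The threshold `r_{n,ε}` is the `ε`-quantile of the tail `r ↦ α_n(r)`. After the rescaling
`r = 2ηc/n`, the hypothesis says that this tail is uniformly within `M₀δ_n` of the `χ²_{k−1}` tail
`Q`, and a quantile moves by at most `2M₀δ_n/κ` under such a perturbation once `Q` decreases at
rate at least `κ` around `Q⁻¹(ε)`. That rate comes from the Gaussian mass of a thin shell
`{s ≤ ‖u‖² < s + t}`: slicing along the first coordinate, every slice over a small ball contains
an interval of length at least `t/(2√b)` on which the Gaussian density is at least `φ(√b)`. -/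

open ProbabilityTheory Set
open scoped Pointwise

def sumSq (u : Fin m → ℝ) : ℝ := ∑ i, u i ^ 2

lemma continuous_sumSq : Continuous (sumSq (m := m)) := by
  unfold sumSq; fun_prop

lemma measurable_sumSq : Measurable (sumSq (m := m)) := continuous_sumSq.measurable

lemma sumSq_cons (x : ℝ) (y : Fin m → ℝ) :
    sumSq (Fin.cons x y : Fin (m + 1) → ℝ) = x ^ 2 + sumSq y := by
  simp [sumSq, Fin.sum_univ_succ]

lemma sumSq_nonneg (u : Fin m → ℝ) : 0 ≤ sumSq u :=
  Finset.sum_nonneg fun i _ => sq_nonneg (u i)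

lemma sumSq_le_zero_iff {u : Fin m → ℝ} : sumSq u ≤ 0 ↔ u = 0 := by
  rw [(sumSq_nonneg u).ge_iff_eq', sumSq,
    Finset.sum_eq_zero_iff_of_nonneg fun i _ => sq_nonneg (u i)]
  simp [funext_iff]

instance : IsProbabilityMeasure (stdGaussianPi m) := by
  unfold stdGaussianPi; infer_instance

instance : Measure.IsOpenPosMeasure (stdGaussianPi m) := by
  have := (gaussianReal_absolutelyContinuous' 0 one_ne_zero).isOpenPosMeasure
  unfold stdGaussianPi; infer_instance

instance : NullSingletonClass (stdGaussianPi (m + 1)) := by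
  have := nullSingletonClass_gaussianReal (μ := 0) one_ne_zero
  unfold stdGaussianPi; infer_instance

noncomputable def chiSqLaw (m : ℕ) : Measure ℝ := (stdGaussianPi m).map sumSq

instance : IsProbabilityMeasure (chiSqLaw m) :=
  Measure.isProbabilityMeasure_map measurable_sumSq.aemeasurable

lemma chiSqTail_eq (m : ℕ) (c : ℝ) : chiSqTail m c = (chiSqLaw m).real (Ici c) := by
  rw [chiSqLaw, measureReal_def, Measure.map_apply measurable_sumSq measurableSet_Ici]
  simp [chiSqTail, genChiSqTail, sumSq, preimage]

lemma chiSqTail_antitone (m : ℕ) : Antitone (chiSqTail m) := fun c c' h => by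
  simp only [chiSqTail_eq]
  exact measureReal_mono (Ici_subset_Ici.2 h)

lemma chiSqTail_sub_chiSqTail {c c' : ℝ} (h : c ≤ c') :
    chiSqTail m c - chiSqTail m c' = (chiSqLaw m).real (Ico c c') := by
  rw [chiSqTail_eq, chiSqTail_eq, ← Ico_union_Ici_eq_Ici h,
    measureReal_union ((Iio_disjoint_Ici le_rfl).mono_left Ico_subset_Iio_self)
      measurableSet_Ici]
  ring

lemma one_sub_cdf_le_chiSqTail (m : ℕ) (c : ℝ) : 1 - cdf (chiSqLaw m) c ≤ chiSqTail m c := by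
  rw [chiSqTail_eq, cdf_eq_real, ← probReal_compl_eq_one_sub measurableSet_Iic, compl_Iic]
  exact measureReal_mono Ioi_subset_Ici_self

lemma chiSqTail_le_one_sub_cdf {c' c : ℝ} (h : c' < c) :
    chiSqTail m c ≤ 1 - cdf (chiSqLaw m) c' := by
  rw [chiSqTail_eq, cdf_eq_real, ← probReal_compl_eq_one_sub measurableSet_Iic, compl_Iic]
  exact measureReal_mono (Ici_subset_Ioi.2 h)

lemma cdf_chiSqLaw_zero (M : ℕ) : cdf (chiSqLaw (M + 1)) 0 = 0 := by
  rw [cdf_eq_real, chiSqLaw, measureReal_def, Measure.map_apply measurable_sumSq measurableSet_Iic]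
  have : sumSq ⁻¹' Iic 0 = ({0} : Set (Fin (M + 1) → ℝ)) := by
    ext u; simp [sumSq_le_zero_iff]
  simp [this]

lemma exists_chiSqTail_le (m : ℕ) {ε : ℝ} (hε : 0 < ε) : ∃ c, 0 < c ∧ chiSqTail m c ≤ ε := by
  obtain ⟨c', hc', hc'₀⟩ := ((tendsto_cdf_atTop (chiSqLaw m)).eventually
    (lt_mem_nhds (by linarith : 1 - ε < 1))).and (eventually_ge_atTop 0) |>.exists
  exact ⟨c' + 1, by linarith, (chiSqTail_le_one_sub_cdf (by linarith)).trans (by linarith)⟩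

lemma exists_lt_chiSqTail (M : ℕ) {ε : ℝ} (hε : ε < 1) :
    ∃ c, 0 < c ∧ ε < chiSqTail (M + 1) c := by
  have hcont := (cdf (chiSqLaw (M + 1))).right_continuous 0
  rw [ContinuousWithinAt, cdf_chiSqLaw_zero] at hcont
  obtain ⟨c, hc, hc₀⟩ := ((hcont.mono_left (nhdsWithin_mono _ Ioi_subset_Ici_self)).eventually
    (gt_mem_nhds (by linarith : (0 : ℝ) < 1 - ε))).and self_mem_nhdsWithin |>.exists
  exact ⟨c, hc₀, by linarith [one_sub_cdf_le_chiSqTail (M + 1) c]⟩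

lemma div_two_sqrt_le_sqrt_add_sub_sqrt {A t b : ℝ} (hA : 0 ≤ A) (ht : 0 ≤ t) (hb : A + t ≤ b) :
    t / (2 * √b) ≤ √(A + t) - √A := by
  have hsq : √(A + t) ^ 2 - √A ^ 2 = t := by
    rw [Real.sq_sqrt hA, Real.sq_sqrt (by linarith)]; ring
  have h₁ : √A ≤ √(A + t) := Real.sqrt_le_sqrt (by linarith)
  have h₂ : √(A + t) ≤ √b := Real.sqrt_le_sqrt hb
  rcases (Real.sqrt_nonneg b).eq_or_lt with hb₀ | hb₀
  · rw [← hb₀]; simp [h₁]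
  rw [div_le_iff₀ (by positivity)]
  nlinarith [Real.sqrt_nonneg A]

lemma gaussianPDFReal_le_of_abs_le {x R : ℝ} (h : |x| ≤ R) :
    gaussianPDFReal 0 1 R ≤ gaussianPDFReal 0 1 x := by
  have : x ^ 2 ≤ R ^ 2 := sq_le_sq' (abs_le.1 h).1 (abs_le.1 h).2
  simp only [gaussianPDFReal, sub_zero]
  gcongr _ * Real.exp ?_
  norm_num
  linarith

lemma ofReal_mul_le_gaussianReal_Ico {x₁ x₂ R : ℝ} (h₁ : 0 ≤ x₁) (h₂ : x₂ ≤ R) :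
    ENNReal.ofReal (gaussianPDFReal 0 1 R * (x₂ - x₁)) ≤ gaussianReal 0 1 (Ico x₁ x₂) := by
  have hφ := gaussianPDFReal_nonneg 0 1 R
  rw [gaussianReal_apply 0 one_ne_zero, ENNReal.ofReal_mul hφ]
  calc ENNReal.ofReal (gaussianPDFReal 0 1 R) * ENNReal.ofReal (x₂ - x₁)
      = ∫⁻ _ in Ico x₁ x₂, ENNReal.ofReal (gaussianPDFReal 0 1 R) := by
        rw [setLIntegral_const, Real.volume_Ico, mul_comm]
    _ ≤ ∫⁻ x in Ico x₁ x₂, gaussianPDF 0 1 x :=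
        setLIntegral_mono (measurable_gaussianPDF 0 1) fun x hx =>
          ENNReal.ofReal_le_ofReal <| gaussianPDFReal_le_of_abs_le <| by
            rw [abs_of_nonneg (h₁.trans hx.1)]; exact hx.2.le.trans h₂

lemma stdGaussianPi_succ_apply (M : ℕ) {S : Set (Fin (M + 1) → ℝ)} (hS : MeasurableSet S) :
    stdGaussianPi (M + 1) S
      = ∫⁻ y, gaussianReal 0 1 ((fun x => Fin.cons x y) ⁻¹' S) ∂stdGaussianPi M := by
  have hmp := (measurePreserving_piFinSuccAbove (n := M) (fun _ => gaussianReal 0 1) 0).symm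
  simp only [stdGaussianPi]
  rw [← hmp.measure_preimage hS.nullMeasurableSet, Measure.prod_apply_symm (hS.preimage
    (MeasurableEquiv.measurable _))]
  simp only [MeasurableEquiv.piFinSuccAbove_symm_apply, Fin.insertNthEquiv_zero]
  rfl

lemma ofReal_le_gaussianReal_shell {r s t b : ℝ} (hr : 0 ≤ r) (hrs : r ≤ s) (ht : 0 ≤ t)
    (hb : s + t ≤ b) :
    ENNReal.ofReal (gaussianPDFReal 0 1 √b * (t / (2 * √b)))
      ≤ gaussianReal 0 1 {x | x ^ 2 + r ∈ Ico s (s + t)} := by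
  have hsub : Ico √(s - r) √(s + t - r) ⊆ {x | x ^ 2 + r ∈ Ico s (s + t)} := by
    intro x ⟨hx₁, hx₂⟩
    have hx₀ : 0 ≤ x := (Real.sqrt_nonneg _).trans hx₁
    have h₁ := (Real.sqrt_le_left hx₀).1 hx₁
    have h₂ := (Real.lt_sqrt hx₀).1 hx₂
    constructor <;> linarith
  refine le_trans ?_ ((ofReal_mul_le_gaussianReal_Ico (Real.sqrt_nonneg _)
    (Real.sqrt_le_sqrt (by linarith))).trans (measure_mono hsub))
  gcongr
  · exact gaussianPDFReal_nonneg 0 1 _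
  · have := div_two_sqrt_le_sqrt_add_sub_sqrt (sub_nonneg.2 hrs) ht (by linarith : s - r + t ≤ b)
    rwa [sub_add_eq_add_sub] at this

lemma exists_mul_le_chiSqTail_sub (M : ℕ) {a b : ℝ} (ha : 0 < a) (hab : a ≤ b) :
    ∃ κ > 0, ∀ s t, a ≤ s → 0 ≤ t → s + t ≤ b →
      κ * t ≤ chiSqTail (M + 1) s - chiSqTail (M + 1) (s + t) := by
  set φ := gaussianPDFReal 0 1 √b
  set B := stdGaussianPi M {y | sumSq y < a}
  have hφ : 0 < φ := gaussianPDFReal_pos 0 1 _ one_ne_zero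
  have hB : 0 < B := (isOpen_lt continuous_sumSq continuous_const).measure_pos _
    ⟨0, by simp [sumSq, ha]⟩
  have hB' : 0 < B.toReal := ENNReal.toReal_pos hB.ne' (measure_ne_top _ _)
  have hb : 0 < √b := Real.sqrt_pos.2 (ha.trans_le hab)
  refine ⟨φ / (2 * √b) * B.toReal, by positivity, fun s t hs ht hst => ?_⟩
  have hball : MeasurableSet {y : Fin M → ℝ | sumSq y < a} :=
    measurableSet_lt measurable_sumSq measurable_const
  have hshell : ENNReal.ofReal (φ * (t / (2 * √b))) * B
      ≤ stdGaussianPi (M + 1) (sumSq ⁻¹' Ico s (s + t)) := by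
    rw [stdGaussianPi_succ_apply M (measurable_sumSq measurableSet_Ico), ← setLIntegral_const]
    refine (setLIntegral_mono' hball fun y hy => ?_).trans (setLIntegral_le_lintegral _ _)
    simp only [preimage_preimage, sumSq_cons]
    exact ofReal_le_gaussianReal_shell (sumSq_nonneg y) (hy.le.trans hs) ht hst
  rw [chiSqTail_sub_chiSqTail (by linarith), chiSqLaw, measureReal_def,
    Measure.map_apply measurable_sumSq measurableSet_Ico]
  refine (ENNReal.ofReal_le_iff_le_toReal (measure_ne_top _ _)).1 (le_trans (le_of_eq ?_) hshell)
  rw [show φ / (2 * √b) * B.toReal * t = φ * (t / (2 * √b)) * B.toReal by ring,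
    ENNReal.ofReal_mul (by positivity), ENNReal.ofReal_toReal (measure_ne_top _ _)]

noncomputable def tailQuantile (F : ℝ → ℝ) (ε : ℝ) : ℝ := sInf {c | 0 < c ∧ F c ≤ ε}

lemma tailQuantile_comp_mul (G : ℝ → ℝ) (ε : ℝ) {a : ℝ} (ha : 0 < a) :
    tailQuantile (fun r => G (a * r)) ε = a⁻¹ * tailQuantile G ε := by
  have : {r | 0 < r ∧ G (a * r) ≤ ε} = a⁻¹ • {c | 0 < c ∧ G c ≤ ε} := by
    ext r
    simp [mem_smul_set_iff_inv_smul_mem₀ (inv_ne_zero ha.ne'), mul_pos_iff_of_pos_left ha]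
  rw [tailQuantile, this, Real.sInf_smul_of_nonneg (inv_nonneg.2 ha.le), smul_eq_mul, tailQuantile]

theorem abs_tailQuantile_sub_le {F G : ℝ → ℝ} {ε κ e a b : ℝ} (hF : Antitone F) (hκ : 0 < κ)
    (he : 0 < e) (hdecr : ∀ s t, a ≤ s → 0 ≤ t → s + t ≤ b → κ * t ≤ F s - F (s + t))
    (hG : ∀ c, 0 < c → |G c - F c| ≤ e) (ha₀ : 0 < a)
    (ha : a ≤ tailQuantile F ε - 2 * (e / κ)) (hb : tailQuantile F ε + 2 * (e / κ) ≤ b) :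
    |tailQuantile G ε - tailQuantile F ε| ≤ 2 * (e / κ) := by
  set q := tailQuantile F ε
  set d := e / κ
  have hd : 0 < d := div_pos he hκ
  have hκd : κ * d = e := mul_div_cancel₀ e hκ.ne'
  have hne : {c | 0 < c ∧ F c ≤ ε}.Nonempty := by
    by_contra h
    rw [not_nonempty_iff_eq_empty] at h
    have : q = 0 := by simp only [q, tailQuantile, h, Real.sInf_empty]
    linarith
  have hF_above : F (q + d) ≤ ε := by
    obtain ⟨c, hc, hcq⟩ := exists_lt_of_csInf_lt hne (lt_add_of_pos_right q hd)
    exact (hF hcq.le).trans hc.2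
  have hbdd (H : ℝ → ℝ) : BddBelow {c | 0 < c ∧ H c ≤ ε} := ⟨0, fun c hc => hc.1.le⟩
  have hF_below : ε < F (q - d) := by
    by_contra! h
    have : q ≤ q - d := csInf_le (hbdd F) ⟨by linarith, h⟩
    linarith
  have hupper : q + 2 * d ∈ {c | 0 < c ∧ G c ≤ ε} := by
    refine ⟨by linarith, ?_⟩
    have := hdecr (q + d) d (by linarith) hd.le (by linarith)
    rw [show q + d + d = q + 2 * d by ring] at this
    linarith [(abs_le.1 (hG (q + 2 * d) (by linarith))).2]
  have hlower : ∀ c ∈ {c | 0 < c ∧ G c ≤ ε}, q - 2 * d ≤ c := by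
    rintro c ⟨hc, hGc⟩
    by_contra! hlt
    have := hdecr (q - 2 * d) d (by linarith) hd.le (by linarith)
    rw [show q - 2 * d + d = q - d by ring] at this
    linarith [hF hlt.le, (abs_le.1 (hG c hc)).1]
  have hG_upper : tailQuantile G ε ≤ q + 2 * d := csInf_le (hbdd G) hupper
  have hG_lower : q - 2 * d ≤ tailQuantile G ε := le_csInf ⟨_, hupper⟩ hlower
  rw [abs_le]
  constructor <;> linarith

lemma chiSqTailInv_eq_tailQuantile (m : ℕ) (ε : ℝ) :
    chiSqTailInv m ε = tailQuantile (chiSqTail m) ε := rfl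

lemma chiSqTailInv_pos (M : ℕ) {ε : ℝ} (hε : ε ∈ Ioo 0 1) : 0 < chiSqTailInv (M + 1) ε := by
  obtain ⟨c₀, hc₀, hεc₀⟩ := exists_lt_chiSqTail M hε.2
  obtain ⟨c₁, hc₁⟩ := exists_chiSqTail_le (M + 1) hε.1
  refine hc₀.trans_le (le_csInf ⟨c₁, hc₁⟩ fun c hc => ?_)
  by_contra! h
  linarith [chiSqTail_antitone (M + 1) h.le, hc.2]

lemma alpha_two_mul_div (Dfun : (Fin (m+1) → ℝ) → (Fin (m+1) → ℝ) → ℝ) (P : Fin (m+1) → ℝ)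
    {n : ℕ} (hn : 0 < n) (c : ℝ) :
    alpha Dfun (2 * c / n) P n = ∑ x : Fin n → Fin (m+1), ∑ y : Fin n → Fin (m+1),
      if c ≤ ((n : ℝ) / 2) * Dfun (typeOf x) (typeOf y) then probSeq P x * probSeq P y else 0 := by
  have hn' : (0 : ℝ) < n := Nat.cast_pos.2 hn
  refine Finset.sum_congr rfl fun x _ => Finset.sum_congr rfl fun y _ => if_congr ?_ rfl rfl
  rw [div_le_iff₀ hn']
  constructor <;> intro h <;> linarith

lemma sInf_alpha_le_eq_mul_tailQuantile (Dfun : (Fin (m+1) → ℝ) → (Fin (m+1) → ℝ) → ℝ)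
    (P : Fin (m+1) → ℝ) {n : ℕ} (hn : 0 < n) {η : ℝ} (hη : 0 < η) (ε : ℝ) :
    sInf {r | 0 < r ∧ alpha Dfun r P n ≤ ε}
      = 2 * η / n * tailQuantile (fun c => alpha Dfun (2 * (η * c) / n) P n) ε := by
  have hn' : (0 : ℝ) < n := Nat.cast_pos.2 hn
  have : (fun r => alpha Dfun r P n)
      = fun r => (fun c => alpha Dfun (2 * (η * c) / n) P n) (n / (2 * η) * r) := by
    ext r; congr 1; field_simp
  have key := tailQuantile_comp_mul (fun c => alpha Dfun (2 * (η * c) / n) P n) ε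
    (show (0 : ℝ) < n / (2 * η) by positivity)
  rw [inv_div, ← this] at key
  exact key

theorem threshold_asymptotics_general {m : ℕ} (hm : 1 ≤ m)
    (D : Divergence m) (η : ℝ) (hη : 0 < η)
    (P : Fin (m+1) → ℝ)
    (ε : ℝ) (hε : ε ∈ Set.Ioo (0:ℝ) 1)
    (M₀ : ℝ) (hM₀ : 0 < M₀) (N₀ : ℕ)
    (δ : ℕ → ℝ) (hδpos : ∀ n, 0 < δ n) (hδ0 : Filter.Tendsto δ Filter.atTop (nhds 0))
    (hbound : ∀ n ≥ N₀, ∀ c : ℝ, 0 < c →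
      |(∑ x : Fin n → Fin (m+1), ∑ y : Fin n → Fin (m+1),
          if c ≤ ((n : ℝ) / 2) * Dapp D (typeOf x) (typeOf y)
          then probSeq P x * probSeq P y else 0)
        - chiSqTail m (c / η)| ≤ M₀ * δ n) :
    ∃ C : ℝ, ∃ N : ℕ, ∀ n ≥ N,
      |sInf {r : ℝ | 0 < r ∧ alpha (Dapp D) r P n ≤ ε}
        - (2 * η / n) * chiSqTailInv m ε| ≤ C * (δ n / n) := by
  obtain ⟨M, rfl⟩ : ∃ M, m = M + 1 := ⟨m - 1, by omega⟩
  have hq : 0 < chiSqTailInv (M + 1) ε := chiSqTailInv_pos M hε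
  rw [chiSqTailInv_eq_tailQuantile] at hq ⊢
  set q := tailQuantile (chiSqTail (M + 1)) ε
  obtain ⟨κ, hκ, hdecr⟩ := exists_mul_le_chiSqTail_sub M (half_pos hq) (by linarith : q / 2 ≤ q + 1)
  have hsmall : ∀ᶠ n in atTop, 2 * (M₀ * δ n / κ) ≤ min (q / 2) 1 := by
    have : Tendsto (fun n => 2 * (M₀ * δ n / κ)) atTop (nhds 0) := by
      simpa using ((hδ0.const_mul M₀).div_const κ).const_mul 2
    exact this.eventually (ge_mem_nhds (lt_min (half_pos hq) one_pos))
  obtain ⟨N, hN⟩ := eventually_atTop.1 (hsmall.and (eventually_ge_atTop (max N₀ 1)))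
  refine ⟨4 * η * M₀ / κ, N, fun n hn => ?_⟩
  obtain ⟨hδn, hnN⟩ := hN n hn
  have hn : 0 < n := by omega
  have hn' : (0 : ℝ) < n := Nat.cast_pos.2 hn
  set G := fun c => alpha (Dapp D) (2 * (η * c) / n) P n
  have hG (c : ℝ) (hc : 0 < c) : |G c - chiSqTail (M + 1) c| ≤ M₀ * δ n := by
    simpa [G, alpha_two_mul_div _ _ hn, mul_div_cancel_left₀ c hη.ne'] using
      hbound n (by omega) (η * c) (by positivity)
  have hquantile := abs_tailQuantile_sub_le (ε := ε) (chiSqTail_antitone (M + 1)) hκ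
    (mul_pos hM₀ (hδpos n)) hdecr hG (half_pos hq) (by linarith [min_le_left (q / 2) 1])
    (by linarith [min_le_right (q / 2) 1])
  rw [sInf_alpha_le_eq_mul_tailQuantile _ P hn hη, ← mul_sub, abs_mul, abs_of_pos (by positivity)]
  calc 2 * η / n * |tailQuantile G ε - q| ≤ 2 * η / n * (2 * (M₀ * δ n / κ)) := by gcongr
    _ = 4 * η * M₀ / κ * (δ n / n) := by ring

/-- Asymptotics of the smallest threshold meeting the type-I error
constraint: if the tail of `(n/2)·D(T_{X^n}‖T_{Y^n})` is uniformly `M₀·δ_n`-close to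
`Q_{χ²_{k−1}}(·/η)`, then
`r_{n,ε} = inf{r > 0 : P(D(T_{X^n}‖T_{Y^n}) ≥ r) ≤ ε} = (2η/n)·Q⁻¹_{χ²_{k−1}}(ε) + O(δ_n/n)`. -/
theorem threshold_asymptotics {m : ℕ} (hm : 1 ≤ m)
    (D : Divergence m) (η : ℝ) (hη : 0 < η) (hinv : IsInvariant D η)
    (P : Fin (m+1) → ℝ) (hP : IsPosDist P)
    (ε : ℝ) (hε : ε ∈ Set.Ioo (0:ℝ) 1)
    (M₀ : ℝ) (hM₀ : 0 < M₀) (N₀ : ℕ)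
    (δ : ℕ → ℝ) (hδpos : ∀ n, 0 < δ n) (hδ0 : Filter.Tendsto δ Filter.atTop (nhds 0))
    (hbound : ∀ n ≥ N₀, ∀ c : ℝ, 0 < c →
      |(∑ x : Fin n → Fin (m+1), ∑ y : Fin n → Fin (m+1),
          if c ≤ ((n : ℝ) / 2) * Dapp D (typeOf x) (typeOf y)
          then probSeq P x * probSeq P y else 0)
        - chiSqTail m (c / η)| ≤ M₀ * δ n) :
    ∃ C : ℝ, ∃ N : ℕ, ∀ n ≥ N,
      |sInf {r : ℝ | 0 < r ∧ alpha (Dapp D) r P n ≤ ε}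
        - (2 * η / n) * chiSqTailInv m ε| ≤ C * (δ n / n) :=
  threshold_asymptotics_general hm D η hη P ε hε M₀ hM₀ N₀ δ hδpos hδ0 hbound

end TwoSampleTest
end
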